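/- arXiv:1703.04834 — 2 statements merged into one kernel-verified Lean document; each statement's English description precedes it below -/
import Mathlib

section
/- Let 𝒜 be a minimal weak deterministic Büchi automaton over the alphabet Σ ∪ {⋆} such that every word of L(𝒜) consists of a finite digit word whose length is a multiple of d, followed by one ⋆, followed by an infinite digit word. Then the language {par(w) : w ∈ L(𝒜)} ⊆ (Σ^d)^*⋆(Σ^d)^ω is saturated if and only if both: δ(q₀, 0^d) = q₀ (where 0^d is the word of d zero digits), and for every state q of the form δ(q₀,x) for some finite word x over Σ ∪ {⋆} and every digit a ≤ b−2, the automaton 𝒜^{seq(b−1)} started in state (δ(q,a),0) and the automaton 𝒜^{seq 0} started in state (δ(q,a+1),0) accept the same language. -/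
/-- A deterministic Büchi automaton over alphabet `A` with states `Q`. -/
structure DBA (A : Type) (Q : Type) where
  delta : Q → A → Q
  init : Q
  F : Set Q

namespace DBA

variable {A Q : Type}

/-- The transition function extended to finite words. -/
def deltaStar (M : DBA A Q) : Q → List A → Q
  | q, [] => q
  | q, a :: u => deltaStar M (M.delta q a) u

/-- The run of `M` on the infinite word `w`. -/
def run (M : DBA A Q) (w : ℕ → A) : ℕ → Q
  | 0 => M.init
  | n + 1 => M.delta (run M w n) (w n)

/-- `M` accepts `w` if some accepting state occurs infinitely often in the run. -/
def Accepts (M : DBA A Q) (w : ℕ → A) : Prop :=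
  ∃ q ∈ M.F, ∀ N : ℕ, ∃ n, N ≤ n ∧ run M w n = q

/-- The ω-language of `M`. -/
def Lang (M : DBA A Q) : Set (ℕ → A) := {w | M.Accepts w}

/-- `M` with initial state changed to `q`. -/
def start (M : DBA A Q) (q : Q) : DBA A Q := { M with init := q }

/-- `q'` is accessible from `q` (by a nonempty word). -/
def Reach (M : DBA A Q) (q q' : Q) : Prop :=
  ∃ u : List A, u ≠ [] ∧ deltaStar M q u = q'

/-- `M` is weak: `F` is a union of strongly connected components. -/
def Weak (M : DBA A Q) : Prop :=
  ∀ q ∈ M.F, ∀ q', M.Reach q q' → M.Reach q' q → q' ∈ M.F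

/-- `M` is minimal: distinct states recognize distinct languages. -/
def Minimal (M : DBA A Q) : Prop :=
  ∀ q q' : Q, q ≠ q' → (M.start q).Lang ≠ (M.start q').Lang

end DBA

/-- Concatenation of a finite word and an infinite word. -/
def cat {A : Type} (u : List A) (w : ℕ → A) : ℕ → A :=
  fun n => if h : n < u.length then u.get ⟨n, h⟩ else w (n - u.length)

/-- The value `⟨v⟩ = Σ_{i<|v|} v[i]·b^(|v|-1-i)` of a finite digit word. -/
noncomputable def natVal (b : ℕ) (v : List (Fin b)) : ℝ :=
  ∑ i : Fin v.length, ((v.get i : ℕ) : ℝ) * (b : ℝ) ^ (v.length - 1 - (i : ℕ))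

/-- The fractional value `⟨w⟩_f = Σ_{i≥0} w[i]·b^(-i-1)` of an infinite digit word. -/
noncomputable def fracVal (b : ℕ) (w : ℕ → Fin b) : ℝ :=
  ∑' i : ℕ, ((w i : ℕ) : ℝ) * (b : ℝ) ^ (-(i : ℤ) - 1)

/-- The word `𝐮⋆𝐰` over `Σ^d ∪ {⋆}`; `none` is the separator `⋆`. -/
def encWord {b d : ℕ} (u : List (Fin d → Fin b)) (w : ℕ → Fin d → Fin b) :
    ℕ → Option (Fin d → Fin b) :=
  cat (u.map some ++ [none]) (fun n => some (w n))

/-- The vector of reals encoded by `𝐮⋆𝐰`. -/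
noncomputable def vecVal {b d : ℕ} (u : List (Fin d → Fin b)) (w : ℕ → Fin d → Fin b) :
    Fin d → ℝ :=
  fun i => natVal b (u.map fun t => t i) + fracVal b (fun n => w n i)

/-- A language of words over `Σ^d ∪ {⋆}` is saturated if membership only depends on
the encoded vector of reals. -/
def Saturated {b d : ℕ} (L : Set (ℕ → Option (Fin d → Fin b))) : Prop :=
  ∀ (u : List (Fin d → Fin b)) (w : ℕ → Fin d → Fin b)
    (u' : List (Fin d → Fin b)) (w' : ℕ → Fin d → Fin b),
    vecVal u w = vecVal u' w' → encWord u w ∈ L → encWord u' w' ∈ L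

/-- The parallelization `par(𝒜)` of an automaton over `Σ ∪ {⋆}`. -/
def parDBA {Q : Type} {b : ℕ} (d : ℕ) (M : DBA (Option (Fin b)) Q) :
    DBA (Option (Fin d → Fin b)) Q where
  delta := fun q x =>
    match x with
    | none => M.delta q none
    | some t => M.deltaStar q (List.ofFn fun i => some (t i))
  init := M.init
  F := M.F

/-- Fill the `f`-th component of a tuple of `Σ^□_f` with the digit `z`. -/
def fixTuple {b d : ℕ} (f : Fin d) (z : Fin b) (t : {i : Fin d // i ≠ f} → Fin b) :
    Fin d → Fin b :=
  fun i => if h : i = f then z else t ⟨i, h⟩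

/-- The automaton `𝒜^{z@f}` over `Σ^□_f ∪ {⋆}`; a letter of `Σ^□_f` is represented by
its tuple of non-`f` components (the `f`-th component being `□`). -/
def fixDBA {Q : Type} {b d : ℕ} (M : DBA (Option (Fin d → Fin b)) Q) (f : Fin d) (z : Fin b) :
    DBA (Option ({i : Fin d // i ≠ f} → Fin b)) Q where
  delta := fun q x =>
    match x with
    | none => M.delta q none
    | some t => M.delta q (some (fixTuple f z t))
  init := M.init
  F := M.F

/-- `fix_{□@f}(𝐰)`: replace the `f`-th component of every non-`⋆` letter by `□`. -/
def eraseComp {b d : ℕ} (f : Fin d) (w : ℕ → Option (Fin d → Fin b)) :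
    ℕ → Option ({i : Fin d // i ≠ f} → Fin b) :=
  fun n => (w n).map fun t i => t i.val

/-- `fix_{z@f}(𝐰)`: replace the `f`-th component (`□`) of every non-`⋆` letter by `z`. -/
def fillComp {b d : ℕ} (f : Fin d) (z : Fin b) (w : ℕ → Option ({i : Fin d // i ≠ f} → Fin b)) :
    ℕ → Option (Fin d → Fin b) :=
  fun n => (w n).map (fixTuple f z)

/-- The automaton `𝒜^{seq z}`, over alphabet `Σ ∪ {□,⋆}` (here `none` is `⋆` and
`some none` is `□`), with states `(Q × {0,…,d−1}) ∪ {⊥}` (`none` is `⊥`). -/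
def seqDBA {Q : Type} {b : ℕ} (d : ℕ) (hd : 0 < d) (M : DBA (Option (Fin b)) Q) (z : Fin b) :
    DBA (Option (Option (Fin b))) (Option (Q × Fin d)) where
  delta := fun s x =>
    match s, x with
    | none, _ => none
    | some (q, i), none => some (M.delta q none, i)
    | some (q, i), some (some a) =>
        if h : (i : ℕ) + 1 < d then some (M.delta q (some a), ⟨(i : ℕ) + 1, h⟩) else none
    | some (q, i), some none =>
        if (i : ℕ) = d - 1 then some (M.delta q (some z), ⟨0, hd⟩) else none
  init := some (M.init, ⟨0, hd⟩)
  F := {s | ∃ q ∈ M.F, ∃ i : Fin d, s = some (q, i)}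

/-- Auxiliary function for flattening an infinite word of blocks:
`flatAux blk v n` is the pair (block index, offset inside the block) of position `n`. -/
def flatAux {A B : Type} (blk : A → List B) (v : ℕ → A) : ℕ → ℕ × ℕ
  | 0 => (0, 0)
  | n + 1 =>
      let p := flatAux blk v n
      if p.2 + 1 < (blk (v p.1)).length then (p.1, p.2 + 1) else (p.1 + 1, 0)

/-- Flattening of an infinite word of (nonempty) blocks. -/
def flatten {A B : Type} [Inhabited B] (blk : A → List B) (v : ℕ → A) : ℕ → B :=
  fun n => (blk (v (flatAux blk v n).1)).getD (flatAux blk v n).2 default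

/-- The block of a letter of `Σ^d ∪ {⋆}`: a `d`-tuple becomes its list of components,
`⋆` stays a single letter. -/
def parBlock {b d : ℕ} : Option (Fin d → Fin b) → List (Option (Fin b))
  | none => [none]
  | some t => List.ofFn fun i => some (t i)

/-- `seq(𝐯)`: the sequentialization of an infinite word over `Σ^d ∪ {⋆}`. -/
def seqWord {b d : ℕ} (v : ℕ → Option (Fin d → Fin b)) : ℕ → Option (Fin b) :=
  flatten parBlock v

/-- The block of a letter of `Σ^□_f ∪ {⋆}`, as a word over `Σ ∪ {□,⋆}`. -/
def sqBlock {b d : ℕ} (f : Fin d) :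
    Option ({i : Fin d // i ≠ f} → Fin b) → List (Option (Option (Fin b)))
  | none => [none]
  | some t => List.ofFn fun i : Fin d =>
      if h : i = f then some none else some (some (t ⟨i, h⟩))

/-- Number of non-`⋆` letters among the first `n` letters of `w`. -/
def digitCount {b : ℕ} (w : ℕ → Option (Fin b)) : ℕ → ℕ
  | 0 => 0
  | n + 1 => digitCount w n + (if w n = none then 0 else 1)


/-! ### Auxiliary development -/

namespace DBA

variable {A Q : Type}

theorem deltaStar_append (M : DBA A Q) (q : Q) (u v : List A) :
    M.deltaStar q (u ++ v) = M.deltaStar (M.deltaStar q u) v := by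
  induction u generalizing q with
  | nil => rfl
  | cons a u ih => simpa [deltaStar] using ih (M.delta q a)

theorem start_init (M : DBA A Q) : M.start M.init = M := rfl

theorem run_start_succ (M : DBA A Q) (q : Q) (w : ℕ → A) (n : ℕ) :
    (M.start q).run w (n + 1) = (M.start (M.delta q (w 0))).run (fun k => w (k + 1)) n := by
  induction n with
  | zero => rfl
  | succ n ih =>
      show (M.start q).delta ((M.start q).run w (n + 1)) (w (n + 1)) = _
      rw [ih]; rfl

end DBA

theorem cat_nil {A : Type} (w : ℕ → A) : cat [] w = w := by
  funext n; simp [cat]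

theorem cat_cons_zero {A : Type} (a : A) (u : List A) (w : ℕ → A) : cat (a :: u) w 0 = a := by
  simp [cat]

theorem cat_cons_succ {A : Type} (a : A) (u : List A) (w : ℕ → A) (n : ℕ) :
    cat (a :: u) w (n + 1) = cat u w n := by
  by_cases h : n < u.length
  · simp [cat, h, Nat.succ_lt_succ_iff]
  · have h' : ¬ n + 1 < (a :: u).length := by simp [Nat.succ_lt_succ_iff]; omega
    simp only [cat, dif_neg h, dif_neg h']
    congr 1
    simp

theorem cat_lt {A : Type} (u : List A) (w : ℕ → A) {n : ℕ} (h : n < u.length) :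
    cat u w n = u.get ⟨n, h⟩ := by simp [cat, h]

theorem cat_ge {A : Type} (u : List A) (w : ℕ → A) {n : ℕ} (h : u.length ≤ n) :
    cat u w n = w (n - u.length) := by
  have : ¬ n < u.length := by omega
  simp [cat, this]

theorem cat_add {A : Type} (u : List A) (w : ℕ → A) (n : ℕ) :
    cat u w (u.length + n) = w n := by
  rw [cat_ge u w (by omega)]; congr 1; omega

namespace DBA

variable {A Q : Type}

theorem run_cat (M : DBA A Q) (q : Q) (u : List A) (w : ℕ → A) (n : ℕ) :
    (M.start q).run (cat u w) (u.length + n) = (M.start (M.deltaStar q u)).run w n := by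
  induction u generalizing q with
  | nil => rw [cat_nil]; simp [DBA.deltaStar]
  | cons a u ih =>
      have h1 : (a :: u).length + n = (u.length + n) + 1 := by simp; omega
      rw [h1, run_start_succ]
      have h2 : (fun k => cat (a :: u) w (k + 1)) = cat u w :=
        funext fun k => cat_cons_succ a u w k
      rw [cat_cons_zero, h2, ih]
      rfl

theorem accepts_cat (M : DBA A Q) (q : Q) (u : List A) (w : ℕ → A) :
    (M.start q).Accepts (cat u w) ↔ (M.start (M.deltaStar q u)).Accepts w := by
  constructor
  · rintro ⟨qf, hqf, h⟩
    refine ⟨qf, hqf, fun N => ?_⟩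
    obtain ⟨n, hn, he⟩ := h (u.length + N)
    refine ⟨n - u.length, by omega, ?_⟩
    have h2 : u.length + (n - u.length) = n := by omega
    have := run_cat M q u w (n - u.length)
    rw [h2] at this
    rw [← this]; exact he
  · rintro ⟨qf, hqf, h⟩
    refine ⟨qf, hqf, fun N => ?_⟩
    obtain ⟨n, hn, he⟩ := h N
    exact ⟨u.length + n, by omega, by rw [run_cat]; exact he⟩

theorem accepts_cat' (M : DBA A Q) (u : List A) (w : ℕ → A) :
    M.Accepts (cat u w) ↔ (M.start (M.deltaStar M.init u)).Accepts w := by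
  conv_lhs => rw [← M.start_init]
  exact accepts_cat M M.init u w

end DBA

/-- The word with digit stream `s` and separator at position `m`. -/
def wordOf {b : ℕ} (m : ℕ) (s : ℕ → Fin b) : ℕ → Option (Fin b) :=
  fun n => if n < m then some (s n) else if n = m then none else some (s (n - 1))

/-- Digit index of letter position `ℓ` in a word with separator at `m`. -/
def dg (m ℓ : ℕ) : ℕ := if ℓ ≤ m then ℓ else ℓ - 1

theorem wordOf_app {b : ℕ} {m : ℕ} {s : ℕ → Fin b} {ℓ : ℕ} (h : ℓ ≠ m) :
    wordOf m s ℓ = some (s (dg m ℓ)) := by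
  unfold wordOf dg
  rcases lt_trichotomy ℓ m with h1 | h1 | h1
  · rw [if_pos h1, if_pos (by omega)]
  · exact absurd h1 h
  · rw [if_neg (by omega), if_neg (by omega), if_neg (by omega)]

theorem wordOf_none_iff {b : ℕ} {m : ℕ} {s : ℕ → Fin b} {ℓ : ℕ} :
    wordOf m s ℓ = none ↔ ℓ = m := by
  constructor
  · intro h
    by_contra hne
    rw [wordOf_app hne] at h
    exact nomatch h
  · intro h; simp [wordOf, h]

theorem wordOf_self {b : ℕ} (m : ℕ) (s : ℕ → Fin b) : wordOf m s m = none :=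
  wordOf_none_iff.2 rfl

theorem wordOf_shift {b : ℕ} (c m : ℕ) (s : ℕ → Fin b) (n : ℕ) :
    wordOf (c + m) s (c + n) = wordOf m (fun i => s (c + i)) n := by
  unfold wordOf
  rcases lt_trichotomy n m with h1 | h1 | h1
  · rw [if_pos (by omega), if_pos h1]
  · subst h1; rw [if_neg (by omega), if_pos rfl, if_neg (by omega), if_pos rfl]
  · rw [if_neg (by omega), if_neg (by omega), if_neg (by omega), if_neg (by omega)]
    have h2 : c + n - 1 = c + (n - 1) := by omega
    rw [h2]

theorem dg_lt_of_lt {m ℓ p : ℕ} (h : ℓ < p) (hℓ : ℓ ≠ m) (hp : p ≠ m) :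
    dg m ℓ < dg m p := by
  unfold dg; split_ifs <;> omega

open Classical

/-- Number of non-`⋆` letters among the first `n` letters (generic version). -/
noncomputable def dCount {α : Type} (r : ℕ → Option α) : ℕ → ℕ
  | 0 => 0
  | n + 1 => dCount r n + (if r n = none then 0 else 1)

theorem dCount_zero {α : Type} (r : ℕ → Option α) : dCount r 0 = 0 := rfl

theorem dCount_succ {α : Type} (r : ℕ → Option α) (n : ℕ) :
    dCount r (n + 1) = dCount r n + (if r n = none then 0 else 1) := rfl

theorem dg_dCount {α : Type} (m p : ℕ) (hp : p ≠ m) (r : ℕ → Option α)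
    (hstar : ∀ n, (r n = none ↔ p + 1 + n = m)) :
    ∀ n, dg m (p + 1 + n) = dg m p + 1 + dCount r n := by
  intro n
  induction n with
  | zero =>
      rw [dCount_zero]
      unfold dg; split_ifs <;> omega
  | succ n ih =>
      have hstep : dg m (p + 1 + (n + 1)) = dg m (p + 1 + n) + (if r n = none then 0 else 1) := by
        by_cases hn : r n = none
        · have hm := (hstar n).1 hn
          rw [if_pos hn]
          unfold dg; split_ifs <;> omega
        · have hm : p + 1 + n ≠ m := fun hc => hn ((hstar n).2 hc)
          rw [if_neg hn]
          unfold dg; split_ifs <;> omega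
      rw [hstep, ih, dCount_succ]
      omega

theorem dCount_of_all_some {α : Type} (r : ℕ → Option α) (n : ℕ)
    (h : ∀ i, i < n → r i ≠ none) : dCount r n = n := by
  induction n with
  | zero => rfl
  | succ n ih =>
      rw [dCount_succ, ih (fun i hi => h i (by omega)), if_neg (h n (by omega))]

theorem dCount_surj {α : Type} (m p : ℕ) (r : ℕ → Option α)
    (hstar : ∀ n, (r n = none ↔ p + 1 + n = m)) (c : ℕ) :
    ∃ n, r n ≠ none ∧ dCount r n = c := by
  by_cases hm : m ≤ p
  · have hall : ∀ i, r i ≠ none := fun i hc => by have := (hstar i).1 hc; omega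
    exact ⟨c, hall c, dCount_of_all_some r c (fun i _ => hall i)⟩
  · push_neg at hm
    have hiff : ∀ n, r n = none ↔ n = m - p - 1 := fun n => by rw [hstar n]; omega
    set n₀ := m - p - 1 with hn₀
    by_cases hc : c < n₀
    · refine ⟨c, ?_, dCount_of_all_some r c (fun i hi hh => ?_)⟩
      · intro h; have := (hiff c).1 h; omega
      · have := (hiff i).1 hh; omega
    · push_neg at hc
      have haux : ∀ t, dCount r (n₀ + 1 + t) = n₀ + t := by
        intro t
        induction t with
        | zero =>
            show dCount r (n₀ + 1) = n₀ + 0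
            rw [dCount_succ, if_pos ((hiff n₀).2 rfl),
              dCount_of_all_some r n₀ (fun i hi hh => by have := (hiff i).1 hh; omega)]
        | succ t ih =>
            show dCount r (n₀ + 1 + t + 1) = n₀ + (t + 1)
            rw [dCount_succ, ih, if_neg (fun hh => by have := (hiff _).1 hh; omega)]
            omega
      refine ⟨c + 1, fun hh => by have := (hiff _).1 hh; omega, ?_⟩
      have h2 : c + 1 = n₀ + 1 + (c - n₀) := by omega
      rw [h2, haux]
      omega


/-! ### Values -/

section Values

variable {b : ℕ}

theorem bR_pos (hb : 2 ≤ b) : (0:ℝ) < b := by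
  have : (0:ℕ) < b := by omega
  exact_mod_cast this

theorem bR_one_lt (hb : 2 ≤ b) : (1:ℝ) < b := by
  have : (1:ℕ) < b := by omega
  exact_mod_cast this

theorem rinv_pos (hb : 2 ≤ b) : (0:ℝ) < (b:ℝ)⁻¹ := by
  have := bR_pos hb; positivity

theorem rinv_lt_one (hb : 2 ≤ b) : (b:ℝ)⁻¹ < 1 := by
  rw [inv_lt_one_iff₀]
  right; exact bR_one_lt hb

theorem fracVal_eq (hb : 2 ≤ b) (w : ℕ → Fin b) :
    fracVal b w = ∑' i : ℕ, ((w i : ℕ) : ℝ) * ((b : ℝ)⁻¹) ^ (i + 1) := by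
  unfold fracVal
  congr 1; funext i
  congr 1
  have h : (-(i:ℤ) - 1) = -((i + 1 : ℕ) : ℤ) := by push_cast; ring
  rw [h, zpow_neg, zpow_natCast, inv_pow]

theorem summable_frac (hb : 2 ≤ b) (w : ℕ → Fin b) :
    Summable (fun i : ℕ => ((w i : ℕ) : ℝ) * ((b : ℝ)⁻¹) ^ (i + 1)) := by
  have hb0 := bR_pos hb
  refine Summable.of_nonneg_of_le (fun i => by positivity) (fun i => ?_)
    (summable_geometric_of_lt_one (by positivity) (rinv_lt_one hb))
  calc ((w i : ℕ) : ℝ) * ((b:ℝ)⁻¹) ^ (i + 1) ≤ (b:ℝ) * ((b:ℝ)⁻¹) ^ (i + 1) := by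
        have : ((w i : ℕ) : ℝ) ≤ (b:ℝ) := by exact_mod_cast (le_of_lt (w i).isLt)
        exact mul_le_mul_of_nonneg_right this (by positivity)
    _ = ((b:ℝ)⁻¹) ^ i := by
        rw [pow_succ, ← mul_assoc, mul_comm (b:ℝ), mul_assoc, mul_inv_cancel₀ (ne_of_gt hb0),
          mul_one]

theorem geo_tail_eq (hb : 2 ≤ b) (k i : ℕ) :
    ((b:ℝ) - 1) * ((b:ℝ)⁻¹) ^ (i + (k + 1) + 1) =
      (((b:ℝ) - 1) * ((b:ℝ)⁻¹) ^ (k + 2)) * ((b:ℝ)⁻¹) ^ i := by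
  rw [show i + (k + 1) + 1 = (k + 2) + i by omega, pow_add]
  ring

theorem summable_geo_tail (hb : 2 ≤ b) (k : ℕ) :
    Summable (fun i : ℕ => ((b:ℝ) - 1) * ((b:ℝ)⁻¹) ^ (i + (k + 1) + 1)) := by
  have : (fun i : ℕ => ((b:ℝ) - 1) * ((b:ℝ)⁻¹) ^ (i + (k + 1) + 1)) =
      (fun i : ℕ => (((b:ℝ) - 1) * ((b:ℝ)⁻¹) ^ (k + 2)) * ((b:ℝ)⁻¹) ^ i) :=
    funext fun i => geo_tail_eq hb k i
  rw [this]
  exact (summable_geometric_of_lt_one (le_of_lt (rinv_pos hb)) (rinv_lt_one hb)).mul_left _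

theorem tsum_geo_tail (hb : 2 ≤ b) (k : ℕ) :
    ∑' i : ℕ, ((b:ℝ) - 1) * ((b:ℝ)⁻¹) ^ (i + (k + 1) + 1) = ((b:ℝ)⁻¹) ^ (k + 1) := by
  have hb0 := bR_pos hb
  have hb1 := bR_one_lt hb
  rw [tsum_congr (geo_tail_eq hb k), tsum_mul_left,
    tsum_geometric_of_lt_one (le_of_lt (rinv_pos hb)) (rinv_lt_one hb)]
  have h2 : (1 - (b:ℝ)⁻¹) = ((b:ℝ) - 1) / b := by field_simp
  rw [h2, inv_div]
  have hne : (b:ℝ) - 1 ≠ 0 := by linarith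
  have hne0 : (b:ℝ) ≠ 0 := by linarith
  field_simp
  rw [show k + 2 = (k + 1) + 1 from rfl, pow_succ, one_div, mul_comm, mul_assoc,
    inv_mul_cancel₀ hne0, mul_one]

/-- `t` is the "high" dual representation of the "low" representation `s`, switching at `k`. -/
def DualAt (b : ℕ) (s t : ℕ → Fin b) (k : ℕ) : Prop :=
  (s k : ℕ) + 1 = (t k : ℕ) ∧ ∀ i, k < i → (s i : ℕ) = b - 1 ∧ (t i : ℕ) = 0

theorem dualVal (hb : 2 ≤ b) {s t : ℕ → Fin b} {k : ℕ}
    (hagree : ∀ i, i < k → s i = t i) (hdual : DualAt b s t k) :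
    fracVal b s = fracVal b t := by
  have hs := summable_frac hb s
  have ht := summable_frac hb t
  rw [fracVal_eq hb s, fracVal_eq hb t, ← Summable.sum_add_tsum_nat_add (k+1) hs,
    ← Summable.sum_add_tsum_nat_add (k+1) ht]
  have hTs : ∑' i : ℕ, ((s (i + (k+1)) : ℕ) : ℝ) * ((b:ℝ)⁻¹) ^ ((i + (k+1)) + 1) =
      ((b:ℝ)⁻¹) ^ (k + 1) := by
    rw [← tsum_geo_tail hb k]
    apply tsum_congr
    intro i
    have h1 : (s (i + (k+1)) : ℕ) = b - 1 := (hdual.2 _ (by omega)).1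
    rw [h1, Nat.cast_sub (by omega)]
    norm_num
  have hTt : ∑' i : ℕ, ((t (i + (k+1)) : ℕ) : ℝ) * ((b:ℝ)⁻¹) ^ ((i + (k+1)) + 1) = 0 := by
    have : ∀ i : ℕ, ((t (i + (k+1)) : ℕ) : ℝ) * ((b:ℝ)⁻¹) ^ ((i + (k+1)) + 1) = 0 := by
      intro i
      have h1 : (t (i + (k+1)) : ℕ) = 0 := (hdual.2 _ (by omega)).2
      rw [h1]
      norm_num
    rw [tsum_congr this, tsum_zero]
  rw [hTs, hTt]
  rw [Finset.sum_range_succ, Finset.sum_range_succ]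
  have hpre : ∑ i ∈ Finset.range k, ((s i : ℕ) : ℝ) * ((b:ℝ)⁻¹) ^ (i + 1) =
      ∑ i ∈ Finset.range k, ((t i : ℕ) : ℝ) * ((b:ℝ)⁻¹) ^ (i + 1) := by
    apply Finset.sum_congr rfl
    intro i hi
    rw [hagree i (Finset.mem_range.1 hi)]
  rw [hpre]
  have htk : ((t k : ℕ) : ℝ) = ((s k : ℕ) : ℝ) + 1 := by
    rw [← hdual.1]
    push_cast
    ring
  rw [htk]
  ring

theorem uniq_aux (hb : 2 ≤ b) (s t : ℕ → Fin b) (k : ℕ) (h : fracVal b s = fracVal b t)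
    (hagree : ∀ i, i < k → s i = t i) (hlt : (s k : ℕ) < (t k : ℕ)) :
    DualAt b s t k := by
  have hb0 := bR_pos hb
  have hs := summable_frac hb s
  have ht := summable_frac hb t
  have hss : Summable (fun i : ℕ => ((s (i + (k+1)) : ℕ) : ℝ) * ((b:ℝ)⁻¹) ^ ((i + (k+1)) + 1)) :=
    (summable_nat_add_iff (f := fun i : ℕ => ((s i : ℕ) : ℝ) * ((b:ℝ)⁻¹) ^ (i + 1)) (k+1)).2 hs
  have htt : Summable (fun i : ℕ => ((t (i + (k+1)) : ℕ) : ℝ) * ((b:ℝ)⁻¹) ^ ((i + (k+1)) + 1)) :=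
    (summable_nat_add_iff (f := fun i : ℕ => ((t i : ℕ) : ℝ) * ((b:ℝ)⁻¹) ^ (i + 1)) (k+1)).2 ht
  set X : ℝ := ((b:ℝ)⁻¹) ^ (k + 1) with hX
  have hXpos : 0 < X := by positivity
  set Ts := ∑' i : ℕ, ((s (i + (k+1)) : ℕ) : ℝ) * ((b:ℝ)⁻¹) ^ ((i + (k+1)) + 1) with hTs
  set Tt := ∑' i : ℕ, ((t (i + (k+1)) : ℕ) : ℝ) * ((b:ℝ)⁻¹) ^ ((i + (k+1)) + 1) with hTt
  have hbound : ∀ i : ℕ, ((s (i + (k+1)) : ℕ) : ℝ) * ((b:ℝ)⁻¹) ^ ((i + (k+1)) + 1) ≤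
      ((b:ℝ) - 1) * ((b:ℝ)⁻¹) ^ (i + (k + 1) + 1) := by
    intro i
    have h1 : (s (i + (k+1)) : ℕ) ≤ b - 1 := by have := (s (i + (k+1))).isLt; omega
    have h2 : ((s (i + (k+1)) : ℕ) : ℝ) ≤ (b:ℝ) - 1 := by
      have h3 : ((s (i + (k+1)) : ℕ) : ℝ) ≤ ((b - 1 : ℕ) : ℝ) := by exact_mod_cast h1
      rw [Nat.cast_sub (by omega)] at h3
      simpa using h3
    exact mul_le_mul_of_nonneg_right h2 (by positivity)
  have hTs_le : Ts ≤ X := by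
    rw [hTs, hX, ← tsum_geo_tail hb k]
    exact Summable.tsum_le_tsum hbound hss (summable_geo_tail hb k)
  have hTt_nn : 0 ≤ Tt := tsum_nonneg (fun i => by positivity)
  have heq : (∑ i ∈ Finset.range (k+1), ((s i : ℕ) : ℝ) * ((b:ℝ)⁻¹) ^ (i + 1)) + Ts =
      (∑ i ∈ Finset.range (k+1), ((t i : ℕ) : ℝ) * ((b:ℝ)⁻¹) ^ (i + 1)) + Tt := by
    rw [hTs, hTt, Summable.sum_add_tsum_nat_add (k+1) hs, Summable.sum_add_tsum_nat_add (k+1) ht,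
      ← fracVal_eq hb s, ← fracVal_eq hb t, h]
  rw [Finset.sum_range_succ, Finset.sum_range_succ] at heq
  have hpre : ∑ i ∈ Finset.range k, ((s i : ℕ) : ℝ) * ((b:ℝ)⁻¹) ^ (i + 1) =
      ∑ i ∈ Finset.range k, ((t i : ℕ) : ℝ) * ((b:ℝ)⁻¹) ^ (i + 1) := by
    apply Finset.sum_congr rfl
    intro i hi
    rw [hagree i (Finset.mem_range.1 hi)]
  rw [hpre] at heq
  have hkey : ((s k : ℕ) : ℝ) * X + Ts = ((t k : ℕ) : ℝ) * X + Tt := by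
    linarith [heq]
  have hcast : ((s k : ℕ) : ℝ) + 1 ≤ ((t k : ℕ) : ℝ) := by exact_mod_cast hlt
  have hTt0 : Tt = 0 := by nlinarith
  have htk : ((t k : ℕ) : ℝ) = ((s k : ℕ) : ℝ) + 1 := by nlinarith
  have hTsX : Ts = X := by nlinarith
  constructor
  · exact_mod_cast htk.symm
  · intro i hi
    set j := i - (k + 1) with hj
    have hij : i = j + (k+1) := by omega
    constructor
    · -- s i = b - 1
      have hD : ∀ i0 : ℕ, (0:ℝ) ≤ ((b:ℝ) - 1) * ((b:ℝ)⁻¹) ^ (i0 + (k + 1) + 1) -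
          ((s (i0 + (k+1)) : ℕ) : ℝ) * ((b:ℝ)⁻¹) ^ ((i0 + (k+1)) + 1) :=
        fun i0 => by linarith [hbound i0]
      have hsumD : Summable (fun i0 : ℕ => ((b:ℝ) - 1) * ((b:ℝ)⁻¹) ^ (i0 + (k + 1) + 1) -
          ((s (i0 + (k+1)) : ℕ) : ℝ) * ((b:ℝ)⁻¹) ^ ((i0 + (k+1)) + 1)) :=
        (summable_geo_tail hb k).sub hss
      have htsumD : ∑' i0 : ℕ, (((b:ℝ) - 1) * ((b:ℝ)⁻¹) ^ (i0 + (k + 1) + 1) -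
          ((s (i0 + (k+1)) : ℕ) : ℝ) * ((b:ℝ)⁻¹) ^ ((i0 + (k+1)) + 1)) = 0 := by
        rw [Summable.tsum_sub (summable_geo_tail hb k) hss, tsum_geo_tail hb k, ← hTs, hTsX, hX]
        ring
      have hD0 : ((b:ℝ) - 1) * ((b:ℝ)⁻¹) ^ (j + (k + 1) + 1) -
          ((s (j + (k+1)) : ℕ) : ℝ) * ((b:ℝ)⁻¹) ^ ((j + (k+1)) + 1) = 0 := by
        have hle := Summable.le_tsum hsumD j (fun m _ => hD m)
        rw [htsumD] at hle
        linarith [hD j]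
      have hsj : ((s (j + (k+1)) : ℕ) : ℝ) = (b:ℝ) - 1 := by
        have hpne : (0:ℝ) < ((b:ℝ)⁻¹) ^ ((j + (k+1)) + 1) := by positivity
        have h2 : (((b:ℝ) - 1) - ((s (j + (k+1)) : ℕ) : ℝ)) * ((b:ℝ)⁻¹) ^ ((j + (k+1)) + 1)
            = 0 := by
          rw [sub_mul]; exact hD0
        rcases mul_eq_zero.1 h2 with h3 | h3
        · linarith
        · exact absurd h3 (ne_of_gt hpne)
      have : ((s (j + (k+1)) : ℕ) : ℝ) = ((b - 1 : ℕ) : ℝ) := by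
        rw [hsj, Nat.cast_sub (by omega)]; norm_num
      have := Nat.cast_injective this
      rw [← hij] at this
      exact this
    · -- t i = 0
      have hterm : ((t (j + (k+1)) : ℕ) : ℝ) * ((b:ℝ)⁻¹) ^ ((j + (k+1)) + 1) = 0 := by
        have hle := Summable.le_tsum htt j (fun m _ => by positivity)
        rw [← hTt] at hle
        rw [hTt0] at hle
        have : (0:ℝ) ≤ ((t (j + (k+1)) : ℕ) : ℝ) * ((b:ℝ)⁻¹) ^ ((j + (k+1)) + 1) := by positivity
        linarith
      have hpne : ((b:ℝ)⁻¹) ^ ((j + (k+1)) + 1) ≠ 0 := by positivity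
      have : ((t (j + (k+1)) : ℕ) : ℝ) = 0 := by
        rcases mul_eq_zero.1 hterm with h1 | h1
        · exact h1
        · exact absurd h1 hpne
      have h0 : (t (j + (k+1)) : ℕ) = 0 := by exact_mod_cast this
      rw [← hij] at h0
      exact h0

theorem uniq (hb : 2 ≤ b) (s t : ℕ → Fin b) (h : fracVal b s = fracVal b t) :
    s = t ∨ ∃ k, (∀ i, i < k → s i = t i) ∧ (DualAt b s t k ∨ DualAt b t s k) := by
  by_cases hst : s = t
  · exact Or.inl hst
  right
  have hex : ∃ k, s k ≠ t k := by
    by_contra hc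
    push_neg at hc
    exact hst (funext hc)
  let k := Nat.find hex
  have hk : s k ≠ t k := Nat.find_spec hex
  have hagree : ∀ i, i < k → s i = t i := fun i hi => by
    by_contra hc
    exact (Nat.find_min hex hi) hc
  refine ⟨k, hagree, ?_⟩
  have hne : (s k : ℕ) ≠ (t k : ℕ) := fun hc => hk (Fin.ext hc)
  rcases lt_or_gt_of_ne hne with hlt | hlt
  · exact Or.inl (uniq_aux hb s t k h hagree hlt)
  · exact Or.inr (uniq_aux hb t s k h.symm (fun i hi => (hagree i hi).symm) hlt)

end Values


/-! ### The sequential automaton bridge -/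

section Seq

theorem mod_succ_lt {d x : ℕ} (h : x % d + 1 < d) : (x + 1) % d = x % d + 1 := by
  conv_lhs => rw [← Nat.div_add_mod x d]
  rw [Nat.add_assoc, Nat.mul_add_mod, Nat.mod_eq_of_lt h]

theorem mod_succ_top {d x : ℕ} (hd : 0 < d) (h : x % d = d - 1) : (x + 1) % d = 0 := by
  conv_lhs => rw [← Nat.div_add_mod x d, h]
  rw [Nat.add_assoc]
  have h2 : d - 1 + 1 = d := by omega
  rw [h2, Nat.mul_add_mod, Nat.mod_self]

theorem mod_window {d j c : ℕ} (hd : 0 < d) : (j + 1 + c) % d = j % d ↔ c % d = d - 1 := by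
  constructor
  · intro h
    have h' : Nat.ModEq d j (j + 1 + c) := Nat.ModEq.symm h
    have hdvd : d ∣ (j + 1 + c) - j := (Nat.modEq_iff_dvd' (by omega)).1 h'
    have hdvd2 : d ∣ 1 + c := by
      have he : j + 1 + c - j = 1 + c := by omega
      rwa [he] at hdvd
    have hdm := Nat.div_add_mod c d
    have h5 : 1 + c = d * (c / d) + (c % d + 1) := by omega
    rw [h5] at hdvd2
    have hdvd3 : d ∣ c % d + 1 := (Nat.dvd_add_right ⟨c / d, rfl⟩).1 hdvd2
    have hle : d ≤ c % d + 1 := Nat.le_of_dvd (by omega) hdvd3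
    have hlt : c % d < d := Nat.mod_lt _ hd
    omega
  · intro h
    have hc : Nat.ModEq d c (d - 1) := by
      show c % d = (d - 1) % d
      rw [Nat.mod_eq_of_lt (show d - 1 < d by omega)]
      exact h
    have h1 : (j + 1 + c) % d = (j + 1 + (d - 1)) % d := Nat.ModEq.add_left (j + 1) hc
    rw [h1, show j + 1 + (d - 1) = j + d by omega, Nat.add_mod_right]

theorem DBA.run_succ {A Q : Type} (M : DBA A Q) (w : ℕ → A) (n : ℕ) :
    M.run w (n + 1) = M.delta (M.run w n) (w n) := rfl

theorem DBA.start_delta {A Q : Type} (M : DBA A Q) (q : Q) :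
    (M.start q).delta = M.delta := rfl

/-- Replace `□` by the digit `z`. -/
def fill {b : ℕ} (z : Fin b) (r : ℕ → Option (Option (Fin b))) : ℕ → Option (Fin b) :=
  fun n => (r n).map fun o => o.getD z

/-- The shape condition making the run of `seqDBA` stay alive at step `n`. -/
def BoxAt {b : ℕ} (d : ℕ) (r : ℕ → Option (Option (Fin b))) (n : ℕ) : Prop :=
  (r n = some none → dCount r n % d = d - 1) ∧
  ∀ c : Fin b, r n = some (some c) → dCount r n % d ≠ d - 1

def Boxed {b : ℕ} (d : ℕ) (r : ℕ → Option (Option (Fin b))) : Prop := ∀ n, BoxAt d r n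

theorem fill_none_iff {b : ℕ} (z : Fin b) (r : ℕ → Option (Option (Fin b))) (n : ℕ) :
    fill z r n = none ↔ r n = none := by
  cases h : r n <;> simp [fill, h]

section SeqLemmas

variable {Q : Type} {b : ℕ} (d : ℕ) (hd : 0 < d) (M : DBA (Option (Fin b)) Q) (z : Fin b)

theorem seqDBA_delta_star (q : Q) (i : Fin d) :
    (seqDBA d hd M z).delta (some (q, i)) none = some (M.delta q none, i) := rfl

theorem seqDBA_delta_box (q : Q) (i : Fin d) :
    (seqDBA d hd M z).delta (some (q, i)) (some none)
      = if (i : ℕ) = d - 1 then some (M.delta q (some z), ⟨0, hd⟩) else none := rfl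

theorem seqDBA_delta_dig (q : Q) (i : Fin d) (c : Fin b) :
    (seqDBA d hd M z).delta (some (q, i)) (some (some c))
      = if h : (i : ℕ) + 1 < d then some (M.delta q (some c), ⟨(i : ℕ) + 1, h⟩) else none := rfl

theorem seqDBA_delta_bot (x : Option (Option (Fin b))) :
    (seqDBA d hd M z).delta none x = none := rfl

theorem seq_run (q : Q) (r : ℕ → Option (Option (Fin b))) (n : ℕ)
    (hbox : ∀ k, k < n → BoxAt d r k) :
    ((seqDBA d hd M z).start (some (q, ⟨0, hd⟩))).run r n =
      some (((M.start q).run (fill z r) n), ⟨dCount r n % d, Nat.mod_lt _ hd⟩) := by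
  induction n with
  | zero =>
      show some (q, (⟨0, hd⟩ : Fin d)) = _
      have h0 : (⟨0, hd⟩ : Fin d) = ⟨dCount r 0 % d, Nat.mod_lt _ hd⟩ := by
        apply Fin.ext
        show 0 = dCount r 0 % d
        rw [dCount_zero, Nat.zero_mod]
      rw [h0]
      rfl
  | succ n ih =>
      have ihh := ih (fun k hk => hbox k (by omega))
      rw [DBA.run_succ, ihh]
      have hMrun : (M.start q).run (fill z r) (n + 1)
          = (M.start q).delta ((M.start q).run (fill z r) n) (fill z r n) := rfl
      cases hr : r n with
      | none =>
          have hf : fill z r n = none := by simp [fill, hr]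
          have hdc : dCount r (n + 1) = dCount r n := by
            rw [dCount_succ, if_pos hr]
            rfl
          rw [hMrun, hf, hdc]
          rfl
      | some oo =>
          cases oo with
          | none =>
              have hb1 : dCount r n % d = d - 1 := (hbox n (by omega)).1 hr
              have hf : fill z r n = some z := by simp [fill, hr]
              have hdc : dCount r (n + 1) % d = 0 := by
                rw [dCount_succ, if_neg (by simp [hr])]
                exact mod_succ_top hd hb1
              rw [hMrun, hf]
              simp only [DBA.start_delta]
              rw [seqDBA_delta_box, if_pos hb1]
              have hfin : (⟨0, hd⟩ : Fin d) = ⟨dCount r (n + 1) % d, Nat.mod_lt _ hd⟩ :=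
                Fin.ext (by simp only [Fin.val_mk]; omega)
              rw [hfin]
          | some cdig =>
              have hb1 : dCount r n % d ≠ d - 1 := (hbox n (by omega)).2 cdig hr
              have hlt2 : dCount r n % d + 1 < d := by
                have := Nat.mod_lt (dCount r n) hd
                omega
              have hf : fill z r n = some cdig := by simp [fill, hr]
              have hdc : dCount r (n + 1) % d = dCount r n % d + 1 := by
                rw [dCount_succ, if_neg (by simp [hr])]
                exact mod_succ_lt hlt2
              rw [hMrun, hf]
              simp only [DBA.start_delta]
              rw [seqDBA_delta_dig, dif_pos hlt2]
              have hfin : (⟨dCount r n % d + 1, hlt2⟩ : Fin d)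
                  = ⟨dCount r (n + 1) % d, Nat.mod_lt _ hd⟩ :=
                Fin.ext (by simp only [Fin.val_mk]; omega)
              rw [hfin]

theorem seq_run_none (s0 : Option (Q × Fin d)) (r : ℕ → Option (Option (Fin b))) (n m : ℕ)
    (h : ((seqDBA d hd M z).start s0).run r n = none) (hm : n ≤ m) :
    ((seqDBA d hd M z).start s0).run r m = none := by
  obtain ⟨t, rfl⟩ : ∃ t, m = n + t := ⟨m - n, by omega⟩
  induction t with
  | zero => exact h
  | succ t ih =>
      rw [show n + (t + 1) = (n + t) + 1 by omega, DBA.run_succ, ih (by omega)]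
      rfl

theorem exists_fin_freq {d : ℕ} (g : ℕ → Fin d) (P : ℕ → Prop)
    (h : ∀ N, ∃ n, N ≤ n ∧ P n) : ∃ i : Fin d, ∀ N, ∃ n, N ≤ n ∧ (P n ∧ g n = i) := by
  by_contra hc
  push_neg at hc
  choose N hN using hc
  obtain ⟨n, hn, hP⟩ := h (Finset.univ.sup N)
  exact (hN (g n) n (le_trans (Finset.le_sup (Finset.mem_univ (g n))) hn) hP) rfl

theorem seq_accepts (q : Q) (r : ℕ → Option (Option (Fin b))) (hbox : Boxed d r) :
    ((seqDBA d hd M z).start (some (q, ⟨0, hd⟩))).Accepts r ↔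
      (M.start q).Accepts (fill z r) := by
  constructor
  · rintro ⟨sF, hsF, hrec⟩
    obtain ⟨qf, hqf, i, rfl⟩ := hsF
    refine ⟨qf, hqf, fun N => ?_⟩
    obtain ⟨n, hn, he⟩ := hrec N
    rw [seq_run d hd M z q r n (fun k _ => hbox k)] at he
    exact ⟨n, hn, (Prod.ext_iff.1 (Option.some_injective _ he)).1⟩
  · rintro ⟨qf, hqf, hrec⟩
    obtain ⟨i₀, hi₀⟩ := exists_fin_freq
      (fun n => (⟨dCount r n % d, Nat.mod_lt _ hd⟩ : Fin d))
      (fun n => (M.start q).run (fill z r) n = qf) hrec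
    refine ⟨some (qf, i₀), ⟨qf, hqf, i₀, rfl⟩, fun N => ?_⟩
    obtain ⟨n, hn, hP, hg⟩ := hi₀ N
    refine ⟨n, hn, ?_⟩
    rw [seq_run d hd M z q r n (fun k _ => hbox k), hP, hg]

theorem seq_dead (q : Q) (r : ℕ → Option (Option (Fin b))) (hnbox : ¬ Boxed d r) :
    ¬ ((seqDBA d hd M z).start (some (q, ⟨0, hd⟩))).Accepts r := by
  rintro ⟨sF, hsF, hrec⟩
  obtain ⟨qf, hqf, i, rfl⟩ := hsF
  have hex : ∃ n, ¬ BoxAt d r n := by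
    by_contra hcc
    push_neg at hcc
    exact hnbox hcc
  have hn₀ : ¬ BoxAt d r (Nat.find hex) := Nat.find_spec hex
  set n₀ := Nat.find hex with hn₀def
  have hmin : ∀ k, k < n₀ → BoxAt d r k := fun k hk => by
    by_contra hc
    exact Nat.find_min hex hk hc
  have hrun := seq_run d hd M z q r n₀ hmin
  have hdead : ((seqDBA d hd M z).start (some (q, ⟨0, hd⟩))).run r (n₀ + 1) = none := by
    rw [DBA.run_succ, hrun]
    cases hviol : r n₀ with
    | none =>
        exfalso
        apply hn₀
        refine ⟨fun h => ?_, fun c h => ?_⟩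
        · rw [hviol] at h; exact nomatch h
        · rw [hviol] at h; exact nomatch h
    | some oo =>
        cases oo with
        | none =>
            have hc : ¬ dCount r n₀ % d = d - 1 := by
              intro hc
              apply hn₀
              refine ⟨fun _ => hc, fun c h => ?_⟩
              rw [hviol] at h
              simp at h
            simp only [DBA.start_delta]
            rw [seqDBA_delta_box, if_neg hc]
        | some cdig =>
            have hc : dCount r n₀ % d = d - 1 := by
              by_contra hc
              apply hn₀
              refine ⟨fun h => ?_, fun c h => ?_⟩
              · rw [hviol] at h; simp at h
              · exact hc
            simp only [DBA.start_delta]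
            rw [seqDBA_delta_dig, dif_neg (by simp only [Fin.val_mk]; omega)]
  obtain ⟨n, hn, he⟩ := hrec (n₀ + 1)
  rw [seq_run_none d hd M z _ r (n₀ + 1) n hdead hn] at he
  exact nomatch he

theorem bridge (z2 : Fin b) (q1 q2 : Q) :
    (((seqDBA d hd M z).start (some (q1, ⟨0, hd⟩))).Lang =
      ((seqDBA d hd M z2).start (some (q2, ⟨0, hd⟩))).Lang) ↔
    ∀ r, Boxed d r →
      (((M.start q1).Accepts (fill z r)) ↔ ((M.start q2).Accepts (fill z2 r))) := by
  constructor
  · intro h r hbox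
    have h2 := Set.ext_iff.1 h r
    rw [← seq_accepts d hd M z q1 r hbox, ← seq_accepts d hd M z2 q2 r hbox]
    exact h2
  · intro h
    ext r
    show ((seqDBA d hd M z).start (some (q1, ⟨0, hd⟩))).Accepts r ↔
      ((seqDBA d hd M z2).start (some (q2, ⟨0, hd⟩))).Accepts r
    by_cases hbox : Boxed d r
    · rw [seq_accepts d hd M z q1 r hbox, seq_accepts d hd M z2 q2 r hbox]
      exact h r hbox
    · exact ⟨fun ha => absurd ha (seq_dead d hd M z q1 r hbox),
        fun ha => absurd ha (seq_dead d hd M z2 q2 r hbox)⟩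

end SeqLemmas

end Seq


/-! ### Words and streams -/

section Words

variable {b d : ℕ}

theorem wordOf_lt {m : ℕ} {s : ℕ → Fin b} {n : ℕ} (h : n < m) :
    wordOf m s n = some (s n) := by
  simp [wordOf, h]

theorem fracVal_shift (hb : 2 ≤ b) (s : ℕ → Fin b) :
    fracVal b s = ((s 0 : ℕ) : ℝ) * (b:ℝ)⁻¹ + (b:ℝ)⁻¹ * fracVal b (fun n => s (n + 1)) := by
  rw [fracVal_eq hb s, fracVal_eq hb (fun n => s (n + 1)),
    Summable.tsum_eq_zero_add (summable_frac hb s)]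
  congr 1
  · simp
  · rw [← tsum_mul_left]
    apply tsum_congr
    intro i
    ring

theorem natVal_cons (a : Fin b) (v : List (Fin b)) :
    natVal b (a :: v) = ((a : ℕ) : ℝ) * (b:ℝ) ^ v.length + natVal b v := by
  simp only [natVal, List.length_cons, Fin.sum_univ_succ, Fin.val_zero, Fin.val_succ,
    List.get_eq_getElem, List.getElem_cons_zero, List.getElem_cons_succ]
  congr 1
  apply Finset.sum_congr rfl
  intro i _
  congr 2
  omega

theorem val_eq (hb : 2 ≤ b) (v : List (Fin b)) (w : ℕ → Fin b) :
    natVal b v + fracVal b w = (b:ℝ) ^ v.length * fracVal b (cat v w) := by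
  induction v with
  | nil => rw [cat_nil]; simp [natVal]
  | cons a v ih =>
      have hb0 := bR_pos hb
      have hcat1 : (fun n => cat (a :: v) w (n + 1)) = cat v w :=
        funext fun n => cat_cons_succ a v w n
      rw [natVal_cons, fracVal_shift hb (cat (a :: v) w), hcat1, cat_cons_zero,
        List.length_cons]
      rw [show ((a : ℕ) : ℝ) * (b:ℝ) ^ v.length + natVal b v + fracVal b w
          = ((a : ℕ) : ℝ) * (b:ℝ) ^ v.length + (natVal b v + fracVal b w) by ring, ih]
      have hbne : (b:ℝ) ≠ 0 := ne_of_gt hb0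
      field_simp
      ring

/-- The total digit stream of a pair `(u, w)`. -/
def sOf (hd : 0 < d) (u : List (Fin d → Fin b)) (w : ℕ → Fin d → Fin b) (n : ℕ) : Fin b :=
  if h : n / d < u.length then u.get ⟨n / d, h⟩ ⟨n % d, Nat.mod_lt _ hd⟩
  else w (n / d - u.length) ⟨n % d, Nat.mod_lt _ hd⟩

theorem sOf_comp (hd : 0 < d) (u : List (Fin d → Fin b)) (w : ℕ → Fin d → Fin b)
    (f : Fin d) (n : ℕ) :
    sOf hd u w (d * n + (f : ℕ)) = cat (u.map fun t => t f) (fun k => w k f) n := by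
  have h1 : (d * n + (f : ℕ)) / d = n := by
    rw [Nat.mul_add_div hd, Nat.div_eq_of_lt f.isLt]
    omega
  have h2 : (d * n + (f : ℕ)) % d = (f : ℕ) := by
    rw [Nat.mul_add_mod, Nat.mod_eq_of_lt f.isLt]
  unfold sOf
  simp only [h1, h2]
  by_cases h : n < u.length
  · rw [dif_pos h, cat_lt _ _ (by simpa using h)]
    simp [List.get_eq_getElem, List.getElem_map]
  · rw [dif_neg h, cat_ge _ _ (by simpa using (by omega : u.length ≤ n))]
    simp

theorem vecVal_eq_stream (hb : 2 ≤ b) (hd : 0 < d) (u : List (Fin d → Fin b))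
    (w : ℕ → Fin d → Fin b) (f : Fin d) :
    vecVal u w f = (b:ℝ) ^ u.length * fracVal b (fun n => sOf hd u w (d * n + (f : ℕ))) := by
  have h1 : (fun n => sOf hd u w (d * n + (f : ℕ))) = cat (u.map fun t => t f) (fun k => w k f) :=
    funext fun n => sOf_comp hd u w f n
  rw [h1]
  show natVal b (u.map fun t => t f) + fracVal b (fun n => w n f) = _
  rw [val_eq hb, List.length_map]

theorem cat_append {A : Type} (u v : List A) (w : ℕ → A) :
    cat (u ++ v) w = cat u (cat v w) := by
  funext n
  by_cases h1 : n < u.length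
  · rw [cat_lt (u ++ v) _ (by simp; omega), cat_lt u _ h1]
    simp only [List.get_eq_getElem]
    rw [List.getElem_append_left h1]
  · by_cases h2 : n < u.length + v.length
    · rw [cat_lt (u ++ v) _ (by simp; omega), cat_ge u _ (by omega),
        cat_lt v _ (by omega)]
      simp only [List.get_eq_getElem]
      rw [List.getElem_append_right (by omega)]
    · rw [cat_ge (u ++ v) _ (by simp; omega), cat_ge u _ (by omega),
        cat_ge v _ (by omega)]
      congr 1
      simp
      omega

/-- The sequential word of the parallel pair `(u, w)` (exactly as in the theorem). -/
def flatW (hd : 0 < d) (u : List (Fin d → Fin b)) (w : ℕ → Fin d → Fin b) :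
    ℕ → Option (Fin b) :=
  cat (((u.map fun t => List.ofFn fun i => some (t i)).flatten) ++ [none])
    (fun n => some (w (n / d) ⟨n % d, Nat.mod_lt n hd⟩))

theorem flatW_cons (hd : 0 < d) (t : Fin d → Fin b) (u : List (Fin d → Fin b))
    (w : ℕ → Fin d → Fin b) :
    flatW hd (t :: u) w = cat (List.ofFn fun i => some (t i)) (flatW hd u w) := by
  unfold flatW
  rw [← cat_append]
  congr 1
  simp

theorem sOf_shift (hd : 0 < d) (t : Fin d → Fin b) (u : List (Fin d → Fin b))
    (w : ℕ → Fin d → Fin b) (i : ℕ) :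
    sOf hd (t :: u) w (d + i) = sOf hd u w i := by
  have h1 : (d + i) / d = i / d + 1 := by rw [Nat.add_comm]; exact Nat.add_div_right i hd
  have h2 : (d + i) % d = i % d := by rw [Nat.add_comm]; exact Nat.add_mod_right i d
  unfold sOf
  simp only [h1, h2, List.length_cons]
  by_cases h : i / d < u.length
  · rw [dif_pos (by omega), dif_pos h]
    simp [List.get_eq_getElem, List.getElem_cons_succ]
  · rw [dif_neg (by omega), dif_neg h]
    congr 1
    omega

theorem flatW_eq_wordOf (hd : 0 < d) (u : List (Fin d → Fin b)) (w : ℕ → Fin d → Fin b) :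
    flatW hd u w = wordOf (d * u.length) (sOf hd u w) := by
  induction u with
  | nil =>
      funext n
      have hnil : flatW hd ([] : List (Fin d → Fin b)) w
          = cat [none] (fun n => some (w (n / d) ⟨n % d, Nat.mod_lt n hd⟩)) := rfl
      rw [hnil]
      cases n with
      | zero =>
          rw [cat_cons_zero]
          simp only [List.length_nil, Nat.mul_zero]
          rw [wordOf_self]
      | succ n =>
          rw [cat_cons_succ, cat_nil]
          simp only [List.length_nil, Nat.mul_zero]
          rw [wordOf_app (by omega)]
          congr 1
  | cons t u ih =>
      rw [flatW_cons hd t u w, ih]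
      funext n
      by_cases h1 : n < d
      · rw [cat_lt _ _ (by simp [List.length_ofFn]; omega)]
        have hlt : n < d * (t :: u).length := by
          simp only [List.length_cons]
          have : d ≤ d * (u.length + 1) := by nlinarith [Nat.le_mul_of_pos_right d (show 0 < u.length + 1 by omega)]
          omega
        rw [wordOf_lt hlt]
        simp only [List.get_eq_getElem, List.getElem_ofFn]
        congr 1
        unfold sOf
        have hdiv : n / d = 0 := Nat.div_eq_of_lt h1
        have hmod : n % d = n := Nat.mod_eq_of_lt h1
        simp only [hdiv, hmod, List.length_cons]
        rw [dif_pos (by omega)]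
        simp [List.get_eq_getElem]
        rfl
      · obtain ⟨i, rfl⟩ : ∃ i, n = d + i := ⟨n - d, by omega⟩
        rw [cat_ge _ _ (by simp)]
        have hlen : (List.ofFn fun i => some (t i) : List (Option (Fin b))).length = d := by
          simp
        rw [hlen]
        have hsub : d + i - d = i := by omega
        rw [hsub]
        have hm : d * (t :: u).length = d + d * u.length := by
          simp only [List.length_cons]
          ring
        rw [hm, wordOf_shift d (d * u.length) _ i]
        congr 1
        funext j
        exact (sOf_shift hd t u w j).symm

theorem encWord_lt {u : List (Fin d → Fin b)} {w : ℕ → Fin d → Fin b} {n : ℕ}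
    (h : n < u.length) : encWord u w n = some (u.get ⟨n, h⟩) := by
  unfold encWord
  rw [cat_lt _ _ (by simp; omega)]
  simp only [List.get_eq_getElem]
  rw [List.getElem_append_left (by simp; omega)]
  simp

theorem encWord_sep (u : List (Fin d → Fin b)) (w : ℕ → Fin d → Fin b) :
    encWord u w u.length = none := by
  unfold encWord
  rw [cat_lt _ _ (by simp)]
  simp only [List.get_eq_getElem]
  rw [List.getElem_append_right (by simp)]
  simp

theorem encWord_gt (u : List (Fin d → Fin b)) (w : ℕ → Fin d → Fin b) (n : ℕ) :
    encWord u w (u.length + 1 + n) = some (w n) := by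
  unfold encWord
  rw [cat_ge _ _ (by simp)]
  congr 1
  simp

theorem encWord_inj {u u' : List (Fin d → Fin b)} {w w' : ℕ → Fin d → Fin b}
    (h : encWord u w = encWord u' w') : u = u' ∧ w = w' := by
  have hlen : u.length = u'.length := by
    by_contra hne
    rcases Nat.lt_or_ge u.length u'.length with hlt | hge
    · have h1 := congrFun h u.length
      rw [encWord_sep, encWord_lt (show u.length < u'.length from hlt)] at h1
      exact nomatch h1
    · have hlt : u'.length < u.length := by omega
      have h1 := congrFun h u'.length
      rw [encWord_sep, encWord_lt hlt] at h1
      exact nomatch h1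
  constructor
  · apply List.ext_get hlen
    intro n hn hn'
    have h1 := congrFun h n
    rw [encWord_lt hn, encWord_lt hn'] at h1
    exact Option.some_injective _ h1
  · funext n
    have h1 := congrFun h (u.length + 1 + n)
    rw [encWord_gt, hlen, encWord_gt] at h1
    exact Option.some_injective _ h1

/-- The parallel integer part of the stream `s` with `k` blocks. -/
def parU (d : ℕ) (k : ℕ) (s : ℕ → Fin b) : List (Fin d → Fin b) :=
  List.ofFn fun j : Fin k => fun i : Fin d => s (d * (j : ℕ) + (i : ℕ))

/-- The parallel fractional part of the stream `s` after `k` blocks. -/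
def parW (d : ℕ) (k : ℕ) (s : ℕ → Fin b) : ℕ → Fin d → Fin b :=
  fun n i => s (d * k + (d * n + (i : ℕ)))

theorem parU_length (k : ℕ) (s : ℕ → Fin b) : (parU d k s).length = k :=
  List.length_ofFn

theorem sOf_par (hd : 0 < d) (k : ℕ) (s : ℕ → Fin b) :
    sOf hd (parU d k s) (parW d k s) = s := by
  funext n
  unfold sOf
  by_cases h : n / d < k
  · rw [dif_pos (show n / d < (parU d k s).length by rw [parU_length]; exact h)]
    unfold parU
    simp only [List.get_eq_getElem, List.getElem_ofFn, Fin.cast_mk, Fin.val_mk]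
    congr 1
    exact Nat.div_add_mod n d
  · rw [dif_neg (show ¬ n / d < (parU d k s).length by rw [parU_length]; exact h)]
    unfold parW
    rw [parU_length]
    congr 1
    have hk' : d * k ≤ d * (n / d) := Nat.mul_le_mul_left d (Nat.le_of_not_lt h)
    calc d * k + (d * (n / d - k) + n % d)
        = d * k + (d * (n / d) - d * k) + n % d := by rw [Nat.mul_sub, Nat.add_assoc]
      _ = d * (n / d) + n % d := by rw [Nat.add_sub_cancel' hk']
      _ = n := Nat.div_add_mod n d

end Words


/-! ### Saturation in stream form -/

section Main

variable {Q : Type} {b d : ℕ}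

/-- The language of the theorem. -/
def Lset (hd : 0 < d) (M : DBA (Option (Fin b)) Q) : Set (ℕ → Option (Fin d → Fin b)) :=
  {x | ∃ (u : List (Fin d → Fin b)) (w : ℕ → Fin d → Fin b),
      x = encWord u w ∧ M.Accepts (flatW hd u w)}

theorem mem_Lset (hd : 0 < d) (M : DBA (Option (Fin b)) Q) (u : List (Fin d → Fin b))
    (w : ℕ → Fin d → Fin b) :
    encWord u w ∈ Lset hd M ↔ M.Accepts (flatW hd u w) := by
  constructor
  · rintro ⟨u', w', heq, hacc⟩
    obtain ⟨rfl, rfl⟩ := encWord_inj heq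
    exact hacc
  · intro h; exact ⟨u, w, rfl, h⟩

theorem flatW_par (hd : 0 < d) (k : ℕ) (s : ℕ → Fin b) :
    flatW hd (parU d k s) (parW d k s) = wordOf (d * k) s := by
  rw [flatW_eq_wordOf, parU_length, sOf_par]

theorem vecVal_par (hb : 2 ≤ b) (hd : 0 < d) (k : ℕ) (s : ℕ → Fin b) (f : Fin d) :
    vecVal (parU d k s) (parW d k s) f
      = (b:ℝ) ^ k * fracVal b (fun n => s (d * n + (f : ℕ))) := by
  rw [vecVal_eq_stream hb hd, parU_length, sOf_par]

/-- Saturation in stream form. -/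
def SatS (hd : 0 < d) (M : DBA (Option (Fin b)) Q) : Prop :=
  ∀ (k : ℕ) (s : ℕ → Fin b) (k' : ℕ) (s' : ℕ → Fin b),
    (∀ f : Fin d, (b:ℝ) ^ k * fracVal b (fun n => s (d * n + (f : ℕ)))
      = (b:ℝ) ^ k' * fracVal b (fun n => s' (d * n + (f : ℕ)))) →
    M.Accepts (wordOf (d * k) s) → M.Accepts (wordOf (d * k') s')

theorem sat_iff_satS (hb : 2 ≤ b) (hd : 0 < d) (M : DBA (Option (Fin b)) Q) :
    Saturated (Lset hd M) ↔ SatS hd M := by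
  constructor
  · intro hsat k s k' s' hval hacc
    have h1 : encWord (parU d k s) (parW d k s) ∈ Lset hd M :=
      (mem_Lset hd M _ _).2 (by rw [flatW_par]; exact hacc)
    have hvec : vecVal (parU d k s) (parW d k s) = vecVal (parU d k' s') (parW d k' s') := by
      funext f
      rw [vecVal_par hb hd, vecVal_par hb hd, hval f]
    have h2 := hsat _ _ _ _ hvec h1
    have h3 := (mem_Lset hd M _ _).1 h2
    rw [flatW_par] at h3
    exact h3
  · intro hsatS u w u' w' hval hmem
    rw [mem_Lset] at hmem ⊢
    rw [flatW_eq_wordOf] at hmem ⊢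
    refine hsatS u.length (sOf hd u w) u'.length (sOf hd u' w') ?_ hmem
    intro f
    rw [← vecVal_eq_stream hb hd u w f, ← vecVal_eq_stream hb hd u' w' f]
    exact congrFun hval f

theorem shape_wordOf (hd : 0 < d) (M : DBA (Option (Fin b)) Q)
    (hshape : ∀ x ∈ M.Lang, ∃ (u : List (Fin b)) (k : ℕ) (w' : ℕ → Fin b),
      u.length = d * k ∧ x = cat (u.map some ++ [none]) (fun n => some (w' n)))
    (x : ℕ → Option (Fin b)) (hx : M.Accepts x) :
    ∃ (k : ℕ) (s : ℕ → Fin b), x = wordOf (d * k) s := by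
  obtain ⟨u, k, w', hlen, hx'⟩ := hshape x hx
  refine ⟨k, cat u w', ?_⟩
  rw [hx']
  funext n
  rcases lt_trichotomy n u.length with h1 | h1 | h1
  · rw [cat_lt _ _ (by simp; omega), wordOf_lt (by omega)]
    simp only [List.get_eq_getElem]
    rw [List.getElem_append_left (by simp; omega)]
    rw [cat_lt _ _ h1]
    simp
  · rw [h1, ← hlen, cat_lt _ _ (by simp), wordOf_self]
    simp only [List.get_eq_getElem]
    rw [List.getElem_append_right (by simp)]
    simp
  · rw [cat_ge _ _ (by simp; omega), wordOf_app (by omega)]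
    have hdg : dg (d * k) n = n - 1 := by unfold dg; rw [if_neg (by omega)]
    rw [hdg, cat_ge _ _ (by omega)]
    simp only [List.length_append, List.length_map, List.length_cons, List.length_nil]
    congr 2
    omega

theorem cat_reconstruct {A : Type} (V : ℕ → A) (p : ℕ) :
    cat ((List.ofFn fun i : Fin p => V (i : ℕ)) ++ [V p]) (fun n => V (p + 1 + n)) = V := by
  funext n
  rcases lt_trichotomy n p with h | h | h
  · rw [cat_lt _ _ (by simp; omega)]
    simp only [List.get_eq_getElem]
    rw [List.getElem_append_left (by simp; omega)]
    simp
  · subst h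
    rw [cat_lt _ _ (by simp)]
    simp only [List.get_eq_getElem]
    rw [List.getElem_append_right (by simp)]
    simp
  · rw [cat_ge _ _ (by simp; omega)]
    simp only [List.length_append, List.length_ofFn, List.length_cons, List.length_nil]
    congr 1
    omega

theorem deltaStar_snoc (M : DBA (Option (Fin b)) Q) (q : Q) (x : List (Option (Fin b)))
    (a : Option (Fin b)) :
    M.deltaStar q (x ++ [a]) = M.delta (M.deltaStar q x) a := by
  rw [DBA.deltaStar_append]
  rfl

end Main


section Switch

variable {Q : Type} {b d : ℕ}

/-- The word-level consequence of condition 2. -/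
def Cond2W (hb : 2 ≤ b) (hd : 0 < d) (M : DBA (Option (Fin b)) Q) : Prop :=
  ∀ (x : List (Option (Fin b))) (a : Fin b) (_ha : (a : ℕ) ≤ b - 2)
    (r : ℕ → Option (Option (Fin b))), Boxed d r →
      (((M.start (M.delta (M.deltaStar M.init x) (some a))).Accepts
          (fill (⟨b - 1, by omega⟩ : Fin b) r)) ↔
       ((M.start (M.delta (M.deltaStar M.init x)
          (some (⟨(a : ℕ) + 1, by omega⟩ : Fin b)))).Accepts
          (fill (⟨0, by omega⟩ : Fin b) r)))

theorem switch (hb : 2 ≤ b) (hd : 0 < d) (M : DBA (Option (Fin b)) Q)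
    (hcond : Cond2W hb hd M) (k : ℕ) (s t : ℕ → Fin b) (f : Fin d)
    (hoth : ∀ n, n % d ≠ (f : ℕ) → t n = s n)
    (j₀ : ℕ)
    (hagree : ∀ n, n < j₀ → s (d * n + (f : ℕ)) = t (d * n + (f : ℕ)))
    (hdual : DualAt b (fun n => s (d * n + (f : ℕ))) (fun n => t (d * n + (f : ℕ))) j₀) :
    M.Accepts (wordOf (d * k) s) ↔ M.Accepts (wordOf (d * k) t) := by
  classical
  set j := d * j₀ + (f : ℕ) with hj
  have hfd : (f : ℕ) < d := f.isLt
  have hjmod : j % d = (f : ℕ) := by rw [hj, Nat.mul_add_mod, Nat.mod_eq_of_lt hfd]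
  -- agreement below j
  have hagree' : ∀ n, n < j → s n = t n := by
    intro n hn
    by_cases hm : n % d = (f : ℕ)
    · have hdm := Nat.div_add_mod n d
      have h1 : n = d * (n / d) + (f : ℕ) := by omega
      have h2 : n / d < j₀ := by
        by_contra hc
        push_neg at hc
        have h3 : d * j₀ ≤ d * (n / d) := Nat.mul_le_mul_left d hc
        omega
      rw [h1]
      exact hagree _ h2
    · exact (hoth n hm).symm
  have ha2 : (t j : ℕ) = (s j : ℕ) + 1 := by
    have h0 := hdual.1
    simp only [] at h0
    simp only [← hj] at h0
    omega
  have ha : (s j : ℕ) ≤ b - 2 := by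
    have := (t j).isLt
    omega
  -- tail values in component f
  have hsz : ∀ n, j < n → n % d = (f : ℕ) → (s n : ℕ) = b - 1 := by
    intro n hn hm
    have hdm := Nat.div_add_mod n d
    have h1 : n = d * (n / d) + (f : ℕ) := by omega
    have h2 : j₀ < n / d := by
      by_contra hc
      push_neg at hc
      have h3 : d * (n / d) ≤ d * j₀ := Nat.mul_le_mul_left d hc
      omega
    have := (hdual.2 (n / d) h2).1
    rw [h1]
    exact this
  have htz : ∀ n, j < n → n % d = (f : ℕ) → (t n : ℕ) = 0 := by
    intro n hn hm
    have hdm := Nat.div_add_mod n d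
    have h1 : n = d * (n / d) + (f : ℕ) := by omega
    have h2 : j₀ < n / d := by
      by_contra hc
      push_neg at hc
      have h3 : d * (n / d) ≤ d * j₀ := Nat.mul_le_mul_left d hc
      omega
    have := (hdual.2 (n / d) h2).2
    rw [h1]
    exact this
  -- position of digit j
  set p := if j < d * k then j else j + 1 with hp
  have hpne : p ≠ d * k := by rw [hp]; split_ifs <;> omega
  have hdgp : dg (d * k) p = j := by
    rw [hp]; unfold dg; split_ifs <;> omega
  have hW1p : wordOf (d * k) s p = some (s j) := by rw [wordOf_app hpne, hdgp]
  have hW2p : wordOf (d * k) t p = some (⟨(s j : ℕ) + 1, by omega⟩ : Fin b) := by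
    rw [wordOf_app hpne, hdgp]
    congr 1
    apply Fin.ext
    simp only [Fin.val_mk]
    omega
  -- the erased suffix
  set r : ℕ → Option (Option (Fin b)) := fun n =>
    if p + 1 + n = d * k then none
    else if (dg (d * k) (p + 1 + n)) % d = (f : ℕ) then some none
    else some (some (s (dg (d * k) (p + 1 + n)))) with hr
  have hstar : ∀ n, r n = none ↔ p + 1 + n = d * k := by
    intro n
    simp only [hr]
    split_ifs with h1 h2 <;> simp [h1]
  have hDG : ∀ n, dg (d * k) (p + 1 + n) = j + 1 + dCount r n := by
    intro n
    rw [dg_dCount (d * k) p hpne r hstar n, hdgp]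
  have hDGgt : ∀ n, j < dg (d * k) (p + 1 + n) := fun n => by rw [hDG n]; omega
  have hbox : Boxed d r := by
    intro n
    constructor
    · intro hbn
      have h1 : ¬ (p + 1 + n = d * k) := by
        intro hc
        have h0 := (hstar n).2 hc
        rw [h0] at hbn
        exact nomatch hbn
      have h2 : (dg (d * k) (p + 1 + n)) % d = (f : ℕ) := by
        by_contra h2
        have h0 : r n = some (some (s (dg (d * k) (p + 1 + n)))) := by
          simp only [hr]
          rw [if_neg h1, if_neg h2]
        rw [h0] at hbn
        simp at hbn
      rw [hDG n, ← hjmod] at h2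
      exact (mod_window hd).1 h2
    · intro cdig hbn
      have h1 : ¬ (p + 1 + n = d * k) := by
        intro hc
        have h0 := (hstar n).2 hc
        rw [h0] at hbn
        exact nomatch hbn
      have h2 : ¬ (dg (d * k) (p + 1 + n)) % d = (f : ℕ) := by
        intro h2
        have h0 : r n = some none := by
          simp only [hr]
          rw [if_neg h1, if_pos h2]
        rw [h0] at hbn
        simp at hbn
      intro hc
      apply h2
      rw [hDG n, ← hjmod]
      exact (mod_window hd).2 hc
  -- the fills
  have hfill1 : fill (⟨b - 1, by omega⟩ : Fin b) r = fun n => wordOf (d * k) s (p + 1 + n) := by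
    funext n
    by_cases h1 : p + 1 + n = d * k
    · have hrn : r n = none := (hstar n).2 h1
      rw [show fill (⟨b - 1, by omega⟩ : Fin b) r n = none by simp [fill, hrn], h1, wordOf_self]
    · rw [wordOf_app h1]
      by_cases h2 : (dg (d * k) (p + 1 + n)) % d = (f : ℕ)
      · have hrn : r n = some none := by simp only [hr]; rw [if_neg h1, if_pos h2]
        rw [show fill (⟨b - 1, by omega⟩ : Fin b) r n
            = some (⟨b - 1, by omega⟩ : Fin b) by simp [fill, hrn]]
        congr 1
        apply Fin.ext
        simp only [Fin.val_mk]
        exact (hsz _ (hDGgt n) h2).symm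
      · have hrn : r n = some (some (s (dg (d * k) (p + 1 + n)))) := by
          simp only [hr]; rw [if_neg h1, if_neg h2]
        rw [show fill (⟨b - 1, by omega⟩ : Fin b) r n
            = some (s (dg (d * k) (p + 1 + n))) by simp [fill, hrn]]
  have hfill2 : fill (⟨0, by omega⟩ : Fin b) r = fun n => wordOf (d * k) t (p + 1 + n) := by
    funext n
    by_cases h1 : p + 1 + n = d * k
    · have hrn : r n = none := (hstar n).2 h1
      rw [show fill (⟨0, by omega⟩ : Fin b) r n = none by simp [fill, hrn], h1, wordOf_self]
    · rw [wordOf_app h1]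
      by_cases h2 : (dg (d * k) (p + 1 + n)) % d = (f : ℕ)
      · have hrn : r n = some none := by simp only [hr]; rw [if_neg h1, if_pos h2]
        rw [show fill (⟨0, by omega⟩ : Fin b) r n
            = some (⟨0, by omega⟩ : Fin b) by simp [fill, hrn]]
        congr 1
        apply Fin.ext
        simp only [Fin.val_mk]
        exact (htz _ (hDGgt n) h2).symm
      · have hrn : r n = some (some (s (dg (d * k) (p + 1 + n)))) := by
          simp only [hr]; rw [if_neg h1, if_neg h2]
        rw [show fill (⟨0, by omega⟩ : Fin b) r n
            = some (s (dg (d * k) (p + 1 + n))) by simp [fill, hrn]]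
        congr 1
        exact (hoth _ h2).symm
  -- prefixes agree
  have hpre : ∀ i, i < p → wordOf (d * k) t i = wordOf (d * k) s i := by
    intro i hi
    by_cases hik : i = d * k
    · rw [hik, wordOf_self, wordOf_self]
    · rw [wordOf_app hik, wordOf_app hik]
      congr 1
      exact (hagree' _ (by
        have := dg_lt_of_lt hi hik hpne
        rw [hdgp] at this
        exact this)).symm
  -- the common prefix list
  set x0 : List (Option (Fin b)) := List.ofFn fun i : Fin p => wordOf (d * k) s (i : ℕ) with hx0
  have hcat1 : cat (x0 ++ [some (s j)]) (fun n => wordOf (d * k) s (p + 1 + n))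
      = wordOf (d * k) s := by
    rw [hx0, ← hW1p]
    exact cat_reconstruct _ p
  have hcat2 : cat (x0 ++ [some (⟨(s j : ℕ) + 1, by omega⟩ : Fin b)])
      (fun n => wordOf (d * k) t (p + 1 + n)) = wordOf (d * k) t := by
    have hx0' : x0 = List.ofFn fun i : Fin p => wordOf (d * k) t (i : ℕ) := by
      rw [hx0]
      exact congrArg List.ofFn (funext fun i => (hpre (i : ℕ) i.isLt).symm)
    rw [hx0', ← hW2p]
    exact cat_reconstruct _ p
  -- assemble
  have hiff := hcond x0 (s j) ha r hbox
  rw [hfill1, hfill2] at hiff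
  rw [← hcat1, ← hcat2]
  rw [M.accepts_cat', M.accepts_cat', deltaStar_snoc, deltaStar_snoc]
  exact hiff

end Switch


section Backward

variable {Q : Type} {b d : ℕ}

theorem pad_word (hd : 0 < d) (k : ℕ) (s : ℕ → Fin b) (z0 : Fin b) :
    wordOf (d * (k + 1)) (cat (List.replicate d z0) s)
      = cat (List.replicate d (some z0)) (wordOf (d * k) s) := by
  funext n
  by_cases h1 : n < d
  · have hdk : d ≤ d * (k + 1) := Nat.le_mul_of_pos_right d (by omega)
    rw [wordOf_lt (by omega), cat_lt _ _ (show n < (List.replicate d (some z0)).length by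
      simp [h1]), cat_lt _ _ (show n < (List.replicate d z0).length by simp [h1])]
    simp
  · obtain ⟨i, rfl⟩ : ∃ i, n = d + i := ⟨n - d, by omega⟩
    rw [cat_ge _ _ (by simp)]
    simp only [List.length_replicate]
    have hsub : d + i - d = i := by omega
    rw [hsub, show d * (k + 1) = d + d * k by ring, wordOf_shift]
    congr 1
    funext m
    rw [cat_ge _ _ (by simp)]
    simp only [List.length_replicate]
    congr 1
    omega

theorem pad_val (hb : 2 ≤ b) (hd : 0 < d) (k : ℕ) (s : ℕ → Fin b) (f : Fin d) :
    (b:ℝ) ^ (k + 1) * fracVal b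
        (fun n => cat (List.replicate d (⟨0, by omega⟩ : Fin b)) s (d * n + (f : ℕ)))
      = (b:ℝ) ^ k * fracVal b (fun n => s (d * n + (f : ℕ))) := by
  have hb0 := bR_pos hb
  have hcomp : (fun n => cat (List.replicate d (⟨0, by omega⟩ : Fin b)) s (d * n + (f : ℕ)))
      = cat [(⟨0, by omega⟩ : Fin b)] (fun n => s (d * n + (f : ℕ))) := by
    funext n
    cases n with
    | zero =>
        rw [cat_cons_zero]
        rw [show d * 0 + (f : ℕ) = (f : ℕ) by omega]
        rw [cat_lt _ _ (show (f : ℕ) < (List.replicate d (⟨0, by omega⟩ : Fin b)).length by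
          simp [f.isLt])]
        simp
    | succ n =>
        rw [cat_cons_succ, cat_nil]
        have hge : d ≤ d * (n + 1) + (f : ℕ) := by
          have := Nat.le_mul_of_pos_right d (show 0 < n + 1 by omega)
          omega
        rw [cat_ge _ _ (by simpa using hge)]
        simp only [List.length_replicate]
        congr 1
        rw [Nat.mul_succ]
        omega
  rw [hcomp, fracVal_shift hb]
  have h0 : (fun n => cat [(⟨0, by omega⟩ : Fin b)] (fun n => s (d * n + (f : ℕ))) (n + 1))
      = fun n => s (d * n + (f : ℕ)) := by
    funext n
    rw [cat_cons_succ, cat_nil]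
  rw [h0, cat_cons_zero]
  simp only [Fin.val_mk, Nat.cast_zero, zero_mul, zero_add]
  rw [pow_succ, mul_assoc, ← mul_assoc (b:ℝ), mul_inv_cancel₀ (ne_of_gt hb0), one_mul]

theorem pad_accept (hb : 2 ≤ b) (hd : 0 < d) (M : DBA (Option (Fin b)) Q)
    (hcond1 : M.deltaStar M.init (List.replicate d (some (⟨0, by omega⟩ : Fin b))) = M.init)
    (k : ℕ) (s : ℕ → Fin b) :
    M.Accepts (wordOf (d * (k + 1)) (cat (List.replicate d (⟨0, by omega⟩ : Fin b)) s))
      ↔ M.Accepts (wordOf (d * k) s) := by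
  rw [pad_word hd k s _, M.accepts_cat', hcond1, M.start_init]

theorem streams_eq (hd : 0 < d) {s s' : ℕ → Fin b}
    (h : ∀ f : Fin d, (fun n => s (d * n + (f : ℕ))) = (fun n => s' (d * n + (f : ℕ)))) :
    s = s' := by
  funext n
  have h1 := congrFun (h ⟨n % d, Nat.mod_lt _ hd⟩) (n / d)
  simp only [Fin.val_mk] at h1
  rw [Nat.div_add_mod n d] at h1
  exact h1

theorem satS_of_conds (hb : 2 ≤ b) (hd : 0 < d) (M : DBA (Option (Fin b)) Q)
    (hcond1 : M.deltaStar M.init (List.replicate d (some (⟨0, by omega⟩ : Fin b))) = M.init)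
    (hcond2 : Cond2W hb hd M) : SatS hd M := by
  classical
  have hb0 := bR_pos hb
  -- Step A: equal numbers of integer blocks
  have hstep : ∀ (k : ℕ) (s s' : ℕ → Fin b),
      (∀ f : Fin d, fracVal b (fun n => s (d * n + (f : ℕ)))
        = fracVal b (fun n => s' (d * n + (f : ℕ)))) →
      (M.Accepts (wordOf (d * k) s) ↔ M.Accepts (wordOf (d * k) s')) := by
    intro k
    have key : ∀ (m : ℕ) (s s' : ℕ → Fin b),
        (∀ f : Fin d, fracVal b (fun n => s (d * n + (f : ℕ)))
          = fracVal b (fun n => s' (d * n + (f : ℕ)))) →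
        (Finset.univ.filter (fun f : Fin d =>
          (fun n => s (d * n + (f : ℕ))) ≠ (fun n => s' (d * n + (f : ℕ))))).card ≤ m →
        (M.Accepts (wordOf (d * k) s) ↔ M.Accepts (wordOf (d * k) s')) := by
      intro m
      induction m with
      | zero =>
          intro s s' hval hcard
          have hallf : ∀ f : Fin d,
              (fun n => s (d * n + (f : ℕ))) = (fun n => s' (d * n + (f : ℕ))) := by
            intro f
            by_contra hc
            have hmem : f ∈ Finset.univ.filter (fun f : Fin d =>
                (fun n => s (d * n + (f : ℕ))) ≠ (fun n => s' (d * n + (f : ℕ)))) :=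
              Finset.mem_filter.2 ⟨Finset.mem_univ f, hc⟩
            have := Finset.card_pos.2 ⟨f, hmem⟩
            omega
          rw [streams_eq hd hallf]
      | succ m ih =>
          intro s s' hval hcard
          by_cases hex : ∃ f : Fin d,
              (fun n => s (d * n + (f : ℕ))) ≠ (fun n => s' (d * n + (f : ℕ)))
          · obtain ⟨f, hf⟩ := hex
            set t : ℕ → Fin b := fun n => if n % d = (f : ℕ) then s' n else s n with ht
            have htf : (fun n => t (d * n + (f : ℕ))) = (fun n => s' (d * n + (f : ℕ))) := by
              funext n
              simp only [ht]
              rw [if_pos (by rw [Nat.mul_add_mod, Nat.mod_eq_of_lt f.isLt])]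
            have htg : ∀ g : Fin d, (g : ℕ) ≠ (f : ℕ) →
                (fun n => t (d * n + (g : ℕ))) = (fun n => s (d * n + (g : ℕ))) := by
              intro g hg
              funext n
              simp only [ht]
              rw [if_neg (by rw [Nat.mul_add_mod, Nat.mod_eq_of_lt g.isLt]; exact hg)]
            have hoth : ∀ n, n % d ≠ (f : ℕ) → t n = s n := by
              intro n hn
              simp only [ht]
              rw [if_neg hn]
            have hiff : M.Accepts (wordOf (d * k) s) ↔ M.Accepts (wordOf (d * k) t) := by
              rcases uniq hb _ _ (hval f) with he | ⟨k₀, hagree, hdd | hdd⟩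
              · exact absurd he hf
              · refine switch hb hd M hcond2 k s t f hoth k₀ ?_ ?_
                · intro n hn
                  have h1 := hagree n hn
                  have h2 := congrFun htf n
                  rw [h2, ← h1]
                · rw [show (fun n => t (d * n + (f : ℕ)))
                    = (fun n => s' (d * n + (f : ℕ))) from htf]
                  exact hdd
              · refine (switch hb hd M hcond2 k t s f (fun n hn => (hoth n hn).symm) k₀ ?_ ?_).symm
                · intro n hn
                  have h1 := hagree n hn
                  have h2 := congrFun htf n
                  rw [h2, ← h1]
                · rw [show (fun n => t (d * n + (f : ℕ)))
                    = (fun n => s' (d * n + (f : ℕ))) from htf]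
                  exact hdd
            have hval' : ∀ g : Fin d, fracVal b (fun n => t (d * n + (g : ℕ)))
                = fracVal b (fun n => s' (d * n + (g : ℕ))) := by
              intro g
              by_cases hg : (g : ℕ) = (f : ℕ)
              · have hgf : g = f := Fin.ext hg
                rw [hgf, htf]
              · rw [htg g hg]
                exact hval g
            have hcard' : (Finset.univ.filter (fun g : Fin d =>
                (fun n => t (d * n + (g : ℕ))) ≠ (fun n => s' (d * n + (g : ℕ))))).card ≤ m := by
              have hsub : (Finset.univ.filter (fun g : Fin d =>
                  (fun n => t (d * n + (g : ℕ))) ≠ (fun n => s' (d * n + (g : ℕ)))))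
                  ⊆ (Finset.univ.filter (fun g : Fin d =>
                  (fun n => s (d * n + (g : ℕ))) ≠ (fun n => s' (d * n + (g : ℕ))))).erase f := by
                intro g hg
                rw [Finset.mem_filter] at hg
                have hgf : (g : ℕ) ≠ (f : ℕ) := by
                  intro hc
                  apply hg.2
                  rw [show g = f from Fin.ext hc, htf]
                rw [Finset.mem_erase, Finset.mem_filter]
                refine ⟨fun hc => hgf (by rw [hc]), Finset.mem_univ g, ?_⟩
                intro hc
                apply hg.2
                rw [htg g hgf, hc]
              have hmemf : f ∈ Finset.univ.filter (fun g : Fin d =>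
                  (fun n => s (d * n + (g : ℕ))) ≠ (fun n => s' (d * n + (g : ℕ)))) :=
                Finset.mem_filter.2 ⟨Finset.mem_univ f, hf⟩
              calc (Finset.univ.filter (fun g : Fin d =>
                  (fun n => t (d * n + (g : ℕ))) ≠ (fun n => s' (d * n + (g : ℕ))))).card
                  ≤ ((Finset.univ.filter (fun g : Fin d =>
                    (fun n => s (d * n + (g : ℕ))) ≠ (fun n => s' (d * n + (g : ℕ))))).erase
                      f).card := Finset.card_le_card hsub
                _ = (Finset.univ.filter (fun g : Fin d =>
                    (fun n => s (d * n + (g : ℕ))) ≠ (fun n => s' (d * n + (g : ℕ))))).card - 1 :=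
                  Finset.card_erase_of_mem hmemf
                _ ≤ m := by omega
            exact hiff.trans (ih t s' hval' hcard')
          · push_neg at hex
            rw [streams_eq hd hex]
    intro s s' hval
    exact key (Finset.univ.filter _).card s s' hval (le_refl _)
  -- Step B: padding
  have hpad : ∀ (k t : ℕ) (s : ℕ → Fin b), ∃ s2 : ℕ → Fin b,
      (M.Accepts (wordOf (d * (k + t)) s2) ↔ M.Accepts (wordOf (d * k) s)) ∧
      ∀ f : Fin d, (b:ℝ) ^ (k + t) * fracVal b (fun n => s2 (d * n + (f : ℕ)))
        = (b:ℝ) ^ k * fracVal b (fun n => s (d * n + (f : ℕ))) := by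
    intro k t s
    induction t with
    | zero => exact ⟨s, Iff.rfl, fun f => rfl⟩
    | succ t ih =>
        obtain ⟨s2, hacc2, hval2⟩ := ih
        refine ⟨cat (List.replicate d (⟨0, by omega⟩ : Fin b)) s2, ?_, ?_⟩
        · rw [show k + (t + 1) = (k + t) + 1 by omega,
            pad_accept hb hd M hcond1 (k + t) s2]
          exact hacc2
        · intro f
          rw [show k + (t + 1) = (k + t) + 1 by omega, pad_val hb hd (k + t) s2 f, hval2 f]
  -- conclude
  intro k s k' s' hval hacc
  obtain ⟨s2, hacc2, hval2⟩ := hpad k (max k k' - k) s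
  obtain ⟨s2', hacc2', hval2'⟩ := hpad k' (max k k' - k') s'
  rw [show k + (max k k' - k) = max k k' by omega] at hacc2 hval2
  rw [show k' + (max k k' - k') = max k k' by omega] at hacc2' hval2'
  apply hacc2'.1
  rw [← hstep (max k k') s2 s2' ?_]
  · exact hacc2.2 hacc
  · intro f
    apply mul_left_cancel₀ (pow_ne_zero (max k k') (ne_of_gt hb0))
    rw [hval2 f, hval2' f, hval f]

end Backward


section Forward

variable {Q : Type} {b d : ℕ}

theorem cl (hb : 2 ≤ b) (hd : 0 < d) (M : DBA (Option (Fin b)) Q)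
    (hshape : ∀ x ∈ M.Lang, ∃ (u : List (Fin b)) (k : ℕ) (w' : ℕ → Fin b),
      u.length = d * k ∧ x = cat (u.map some ++ [none]) (fun n => some (w' n)))
    (hsatS : SatS hd M)
    (x : List (Option (Fin b))) (c c' z z' : Fin b)
    (hdual : ((c' : ℕ) = (c : ℕ) + 1 ∧ (z : ℕ) = b - 1 ∧ (z' : ℕ) = 0)
           ∨ ((c : ℕ) = (c' : ℕ) + 1 ∧ (z : ℕ) = 0 ∧ (z' : ℕ) = b - 1))
    (r : ℕ → Option (Option (Fin b))) (hbox : Boxed d r)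
    (hacc : M.Accepts (cat (x ++ [some c]) (fill z r))) :
    M.Accepts (cat (x ++ [some c']) (fill z' r)) := by
  classical
  obtain ⟨k, s, hw⟩ := shape_wordOf hd M hshape _ hacc
  set p := x.length with hp
  have hxlen : (x ++ [some c]).length = p + 1 := by simp [hp]
  have hW1p : wordOf (d * k) s p = some c := by
    rw [← hw, cat_lt _ _ (by simp [hp])]
    simp only [List.get_eq_getElem]
    rw [List.getElem_append_right (by omega)]
    simp
  have hpne : p ≠ d * k := by
    intro hcc
    rw [hcc, wordOf_self] at hW1p
    exact nomatch hW1p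
  set j := dg (d * k) p with hj
  have hsj : s j = c := by
    have h0 := wordOf_app (s := s) hpne
    rw [h0] at hW1p
    exact Option.some_injective _ hW1p
  have htail : ∀ n, wordOf (d * k) s (p + 1 + n) = fill z r n := by
    intro n
    rw [← hw, cat_ge _ _ (by rw [hxlen]; omega)]
    rw [hxlen]
    congr 1
    omega
  have hstar : ∀ n, r n = none ↔ p + 1 + n = d * k := by
    intro n
    rw [← fill_none_iff z r n, ← htail n, wordOf_none_iff]
  have hDG : ∀ n, dg (d * k) (p + 1 + n) = j + 1 + dCount r n := by
    intro n
    rw [dg_dCount (d * k) p hpne r hstar n, ← hj]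
  have hDGgt : ∀ n, j < dg (d * k) (p + 1 + n) := fun n => by rw [hDG n]; omega
  have hdigit : ∀ n (c₀ : Fin b), r n = some (some c₀) →
      s (dg (d * k) (p + 1 + n)) = c₀ ∧ (dg (d * k) (p + 1 + n)) % d ≠ j % d := by
    intro n c₀ hrn
    have h1 : p + 1 + n ≠ d * k := by
      intro hcc
      have h0 := (hstar n).2 hcc
      rw [hrn] at h0
      exact nomatch h0
    constructor
    · have h2 := htail n
      rw [wordOf_app h1] at h2
      have h3 : fill z r n = some c₀ := by simp [fill, hrn]
      rw [h3] at h2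
      exact Option.some_injective _ h2
    · have h4 := (hbox n).2 c₀ hrn
      rw [hDG n]
      intro hcc
      exact h4 ((mod_window hd).1 hcc)
  have hboxr : ∀ n, r n = some none →
      s (dg (d * k) (p + 1 + n)) = z ∧ (dg (d * k) (p + 1 + n)) % d = j % d := by
    intro n hrn
    have h1 : p + 1 + n ≠ d * k := by
      intro hcc
      have h0 := (hstar n).2 hcc
      rw [hrn] at h0
      exact nomatch h0
    constructor
    · have h2 := htail n
      rw [wordOf_app h1] at h2
      have h3 : fill z r n = some z := by simp [fill, hrn]
      rw [h3] at h2
      exact Option.some_injective _ h2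
    · have h4 := (hbox n).1 hrn
      rw [hDG n]
      exact (mod_window hd).2 h4
  have htailz : ∀ nn, j < nn → nn % d = j % d → s nn = z := by
    intro nn hgt hmod
    obtain ⟨n, hrn, hdc⟩ := dCount_surj (d * k) p r hstar (nn - j - 1)
    have hDGn : dg (d * k) (p + 1 + n) = nn := by rw [hDG n, hdc]; omega
    cases hr2 : r n with
    | none => exact absurd hr2 hrn
    | some oo =>
        cases oo with
        | none =>
            have := (hboxr n hr2).1
            rw [hDGn] at this
            exact this
        | some c₀ =>
            have h5 := (hdigit n c₀ hr2).2
            rw [hDGn] at h5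
            exact absurd hmod h5
  set s2 : ℕ → Fin b := fun nn => if nn = j then c'
    else if j < nn ∧ nn % d = j % d then z' else s nn with hs2
  -- value equality
  have hvals : ∀ f : Fin d, (b:ℝ) ^ k * fracVal b (fun n => s (d * n + (f : ℕ)))
      = (b:ℝ) ^ k * fracVal b (fun n => s2 (d * n + (f : ℕ))) := by
    intro f
    by_cases hf : (f : ℕ) = j % d
    · congr 1
      have hjd := Nat.div_add_mod j d
      have hj₀ : j = d * (j / d) + (f : ℕ) := by omega
      have hstream_lt : ∀ n, n < j / d → (d * n + (f : ℕ)) < j := by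
        intro n hn
        have h0 : d * (n + 1) ≤ d * (j / d) := Nat.mul_le_mul_left d (by omega)
        rw [Nat.mul_succ] at h0
        have hfd := f.isLt
        omega
      have hstream_gt : ∀ n, j / d < n →
          j < d * n + (f : ℕ) ∧ (d * n + (f : ℕ)) % d = j % d := by
        intro n hn
        have h0 : d * (j / d + 1) ≤ d * n := Nat.mul_le_mul_left d (by omega)
        rw [Nat.mul_succ] at h0
        constructor
        · omega
        · rw [Nat.mul_add_mod, Nat.mod_eq_of_lt f.isLt, hf]
      have hs2lt : ∀ n, n < j / d → s2 (d * n + (f : ℕ)) = s (d * n + (f : ℕ)) := by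
        intro n hn
        have h0 := hstream_lt n hn
        simp only [hs2]
        rw [if_neg (by omega), if_neg (by rintro ⟨h1, h2⟩; omega)]
      have hs2j : s2 (d * (j / d) + (f : ℕ)) = c' := by
        simp only [hs2]
        rw [if_pos (by omega)]
      have hsjj : s (d * (j / d) + (f : ℕ)) = c := by rw [← hj₀, hsj]
      have hs2gt : ∀ n, j / d < n → s2 (d * n + (f : ℕ)) = z' := by
        intro n hn
        obtain ⟨h1, h2⟩ := hstream_gt n hn
        simp only [hs2]
        rw [if_neg (by omega), if_pos ⟨h1, h2⟩]
      have hsgt : ∀ n, j / d < n → s (d * n + (f : ℕ)) = z := by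
        intro n hn
        obtain ⟨h1, h2⟩ := hstream_gt n hn
        exact htailz _ h1 h2
      rcases hdual with ⟨h1, h2, h3⟩ | ⟨h1, h2, h3⟩
      · refine dualVal hb (k := j / d) (fun i hi => (hs2lt i hi).symm) ?_
        constructor
        · show (s (d * (j / d) + (f : ℕ)) : ℕ) + 1 = (s2 (d * (j / d) + (f : ℕ)) : ℕ)
          rw [hsjj, hs2j]
          omega
        · intro i hi
          constructor
          · show (s (d * i + (f : ℕ)) : ℕ) = b - 1
            rw [hsgt i hi]
            omega
          · show (s2 (d * i + (f : ℕ)) : ℕ) = 0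
            rw [hs2gt i hi]
            omega
      · refine (dualVal hb (k := j / d) (fun i hi => (hs2lt i hi)) ?_).symm
        constructor
        · show (s2 (d * (j / d) + (f : ℕ)) : ℕ) + 1 = (s (d * (j / d) + (f : ℕ)) : ℕ)
          rw [hsjj, hs2j]
          omega
        · intro i hi
          constructor
          · show (s2 (d * i + (f : ℕ)) : ℕ) = b - 1
            rw [hs2gt i hi]
            omega
          · show (s (d * i + (f : ℕ)) : ℕ) = 0
            rw [hsgt i hi]
            omega
    · have hfeq : (fun n => s2 (d * n + (f : ℕ))) = (fun n => s (d * n + (f : ℕ))) := by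
        funext n
        have hmod : (d * n + (f : ℕ)) % d = (f : ℕ) := by
          rw [Nat.mul_add_mod, Nat.mod_eq_of_lt f.isLt]
        have hne1 : d * n + (f : ℕ) ≠ j := by
          intro hcc
          apply hf
          rw [← hcc, hmod]
        simp only [hs2]
        rw [if_neg hne1, if_neg (by rintro ⟨hh1, hh2⟩; exact hf (by rw [← hmod, hh2]))]
      rw [hfeq]
  have hacc2 := hsatS k s k s2 hvals (hw ▸ hacc)
  have hw2 : wordOf (d * k) s2 = cat (x ++ [some c']) (fill z' r) := by
    funext nn
    rcases lt_trichotomy nn p with h1 | h1 | h1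
    · have hL : wordOf (d * k) s2 nn = wordOf (d * k) s nn := by
        by_cases hnk : nn = d * k
        · rw [hnk, wordOf_self, wordOf_self]
        · rw [wordOf_app hnk, wordOf_app hnk]
          congr 1
          have hlt : dg (d * k) nn < j := by rw [hj]; exact dg_lt_of_lt h1 hnk hpne
          simp only [hs2]
          rw [if_neg (by omega), if_neg (by rintro ⟨hh1, hh2⟩; omega)]
      rw [hL, ← hw, cat_lt _ _ (by simp [hp]; omega), cat_lt _ _ (by simp [hp]; omega)]
      simp only [List.get_eq_getElem]
      rw [List.getElem_append_left (by omega), List.getElem_append_left (by omega)]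
    · rw [h1, wordOf_app hpne, ← hj]
      have hs2j : s2 j = c' := by simp only [hs2]; simp
      rw [hs2j, cat_lt _ _ (by simp [hp])]
      simp only [List.get_eq_getElem]
      rw [List.getElem_append_right (by omega)]
      simp
    · obtain ⟨n, rfl⟩ : ∃ n, nn = p + 1 + n := ⟨nn - p - 1, by omega⟩
      rw [cat_ge _ _ (by simp [hp])]
      have hidx : p + 1 + n - (x ++ [some c']).length = n := by simp [hp]
      rw [hidx]
      cases hr2 : r n with
      | none =>
          have h0 := (hstar n).1 hr2
          rw [h0, wordOf_self]
          simp [fill, hr2]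
      | some oo =>
          have hne : p + 1 + n ≠ d * k := by
            intro hcc
            have h0 := (hstar n).2 hcc
            rw [hr2] at h0
            exact nomatch h0
          cases oo with
          | none =>
              obtain ⟨hv, hm⟩ := hboxr n hr2
              rw [wordOf_app hne]
              have hz' : s2 (dg (d * k) (p + 1 + n)) = z' := by
                simp only [hs2]
                rw [if_neg (by have := hDGgt n; omega), if_pos ⟨hDGgt n, hm⟩]
              rw [hz']
              simp [fill, hr2]
          | some c₀ =>
              obtain ⟨hv, hm⟩ := hdigit n c₀ hr2
              rw [wordOf_app hne]
              have hc₀ : s2 (dg (d * k) (p + 1 + n)) = c₀ := by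
                simp only [hs2]
                rw [if_neg (by have := hDGgt n; omega),
                  if_neg (by rintro ⟨hh1, hh2⟩; exact hm hh2), hv]
              rw [hc₀]
              simp [fill, hr2]
  rw [← hw2]
  exact hacc2

end Forward


section ForwardCond

variable {Q : Type} {b d : ℕ}

theorem cond2_of_sat (hb : 2 ≤ b) (hd : 0 < d) (M : DBA (Option (Fin b)) Q)
    (hshape : ∀ x ∈ M.Lang, ∃ (u : List (Fin b)) (k : ℕ) (w' : ℕ → Fin b),
      u.length = d * k ∧ x = cat (u.map some ++ [none]) (fun n => some (w' n)))
    (hsatS : SatS hd M) : Cond2W hb hd M := by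
  intro x a ha r hbox
  rw [← deltaStar_snoc, ← M.accepts_cat', ← deltaStar_snoc, ← M.accepts_cat']
  constructor
  · intro h
    exact cl hb hd M hshape hsatS x a ⟨(a : ℕ) + 1, by omega⟩ ⟨b - 1, by omega⟩
      ⟨0, by omega⟩ (Or.inl ⟨rfl, rfl, rfl⟩) r hbox h
  · intro h
    exact cl hb hd M hshape hsatS x ⟨(a : ℕ) + 1, by omega⟩ a ⟨0, by omega⟩
      ⟨b - 1, by omega⟩ (Or.inr ⟨rfl, rfl, rfl⟩) r hbox h

theorem cond1_of_sat (hb : 2 ≤ b) (hd : 0 < d) (M : DBA (Option (Fin b)) Q)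
    (hmin : M.Minimal)
    (hshape : ∀ x ∈ M.Lang, ∃ (u : List (Fin b)) (k : ℕ) (w' : ℕ → Fin b),
      u.length = d * k ∧ x = cat (u.map some ++ [none]) (fun n => some (w' n)))
    (hsatS : SatS hd M) :
    M.deltaStar M.init (List.replicate d (some (⟨0, by omega⟩ : Fin b))) = M.init := by
  by_contra hne
  apply hmin _ _ hne
  rw [M.start_init]
  ext w
  show (M.start (M.deltaStar M.init
      (List.replicate d (some (⟨0, by omega⟩ : Fin b))))).Accepts w ↔ M.Accepts w
  constructor
  · intro hw
    have hacc : M.Accepts (cat (List.replicate d (some (⟨0, by omega⟩ : Fin b))) w) := by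
      rw [M.accepts_cat']
      exact hw
    obtain ⟨k, s, hw0⟩ := shape_wordOf hd M hshape _ hacc
    have hk : k ≠ 0 := by
      intro hk0
      rw [hk0] at hw0
      have h0 := congrFun hw0 0
      rw [cat_lt _ _ (by simp; omega)] at h0
      rw [show d * 0 = 0 by ring] at h0
      rw [wordOf_self] at h0
      simp at h0
    obtain ⟨k', rfl⟩ : ∃ k', k = k' + 1 := ⟨k - 1, by omega⟩
    have hdk : d ≤ d * (k' + 1) := Nat.le_mul_of_pos_right d (by omega)
    have hs0 : ∀ i, i < d → s i = (⟨0, by omega⟩ : Fin b) := by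
      intro i hi
      have h0 := congrFun hw0 i
      rw [cat_lt _ _ (by simp [hi]), wordOf_lt (by omega)] at h0
      simp at h0
      exact h0.symm
    have hseq : s = cat (List.replicate d (⟨0, by omega⟩ : Fin b)) (fun n => s (d + n)) := by
      funext n
      by_cases hn : n < d
      · rw [cat_lt _ _ (by simp [hn])]
        simp [hs0 n hn]
      · rw [cat_ge _ _ (by simp; omega)]
        simp only [List.length_replicate]
        congr 1
        omega
    have hacc2 : M.Accepts (wordOf (d * k') (fun n => s (d + n))) := by
      refine hsatS (k' + 1) s k' (fun n => s (d + n)) ?_ (hw0 ▸ hacc)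
      intro f
      conv_lhs => rw [hseq]
      exact pad_val hb hd k' _ f
    have hw2 : w = wordOf (d * k') (fun n => s (d + n)) := by
      funext n
      have h0 := congrFun hw0 (d + n)
      rw [cat_ge _ _ (by simp)] at h0
      simp only [List.length_replicate] at h0
      rw [show d + n - d = n by omega] at h0
      rw [show d * (k' + 1) = d + d * k' by ring, wordOf_shift] at h0
      exact h0
    rw [hw2]
    exact hacc2
  · intro hw
    obtain ⟨k, s, rfl⟩ := shape_wordOf hd M hshape w hw
    have hacc2 : M.Accepts (wordOf (d * (k + 1))
        (cat (List.replicate d (⟨0, by omega⟩ : Fin b)) s)) := by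
      refine hsatS k s (k + 1) _ ?_ hw
      intro f
      exact (pad_val hb hd k s f).symm
    rw [pad_word hd k s _, M.accepts_cat'] at hacc2
    exact hacc2

end ForwardCond

/-- characterization of sequential RVAs via the automata `𝒜^{seq z}`. -/
theorem stmt14 {Q : Type} [Fintype Q] {b : ℕ} (hb : 2 ≤ b) (d : ℕ) (hd : 0 < d)
    (M : DBA (Option (Fin b)) Q) (hweak : M.Weak) (hmin : M.Minimal)
    (hshape : ∀ x ∈ M.Lang, ∃ (u : List (Fin b)) (k : ℕ) (w' : ℕ → Fin b),
      u.length = d * k ∧ x = cat (u.map some ++ [none]) (fun n => some (w' n))) :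
    Saturated {x : ℕ → Option (Fin d → Fin b) |
        ∃ (u : List (Fin d → Fin b)) (w : ℕ → Fin d → Fin b),
          x = encWord u w ∧
          M.Accepts (cat
            (((u.map fun t => List.ofFn fun i => some (t i)).flatten) ++ [none])
            (fun n => some (w (n / d) ⟨n % d, Nat.mod_lt n hd⟩)))} ↔
      (M.deltaStar M.init (List.replicate d (some (⟨0, by omega⟩ : Fin b))) = M.init ∧
       ∀ (x : List (Option (Fin b))) (a : Fin b) (ha : (a : ℕ) ≤ b - 2),
         ((seqDBA d hd M (⟨b - 1, by omega⟩ : Fin b)).start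
             (some (M.delta (M.deltaStar M.init x) (some a), ⟨0, hd⟩))).Lang =
         ((seqDBA d hd M (⟨0, by omega⟩ : Fin b)).start
             (some (M.delta (M.deltaStar M.init x)
                 (some (⟨(a : ℕ) + 1, by omega⟩ : Fin b)), ⟨0, hd⟩))).Lang) := by
  show Saturated (Lset hd M) ↔ _
  rw [sat_iff_satS hb hd M]
  constructor
  · intro hsatS
    refine ⟨cond1_of_sat hb hd M hmin hshape hsatS, ?_⟩
    intro x a ha
    rw [bridge d hd M _ _ _ _]
    intro r hbox
    exact cond2_of_sat hb hd M hshape hsatS x a ha r hbox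
  · rintro ⟨h1, h2⟩
    refine satS_of_conds hb hd M h1 ?_
    intro x a ha r hbox
    exact (bridge d hd M _ _ _ _).1 (h2 x a ha) r hbox
end

section
/- Let 𝒜 be a weak deterministic Büchi automaton over a finite alphabet A, and call a state recurrent if it is accessible from itself by a nonempty word. Then Q_∅ = {q ∈ Q : L(𝒜_q) = ∅} is the greatest subset of Q, with respect to inclusion, among the subsets S of Q satisfying: S contains no recurrent accepting state, and δ(q,a) ∈ S for every q ∈ S and every letter a ∈ A. That is, Q_∅ satisfies both properties, and every subset of Q satisfying both properties is contained in Q_∅. -/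
/-! A run that visits an accepting state `q'` infinitely often passes through `q'` twice, so `q'`
is recurrent, and it lies in every transition-closed set containing the start state.
Conversely a recurrent accepting state `q`, with a cycle `u` at `q`, accepts the periodic word
`u u u ⋯`. -/

namespace DBA

variable {A Q : Type} (M : DBA A Q)

@[simp]
lemma deltaStar_start (q : Q) : (M.start q).deltaStar = M.deltaStar := by
  funext q' u
  induction u generalizing q' with
  | nil => rfl
  | cons a u ih => exact ih (M.delta q' a)

@[simp]
lemma reach_start (q : Q) : (M.start q).Reach = M.Reach := by
  ext
  simp only [Reach, deltaStar_start]

lemma run_add (w : ℕ → A) (n k : ℕ) :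
    M.run w (n + k) = M.deltaStar (M.run w n) (List.ofFn fun i : Fin k => w (n + i)) := by
  induction k generalizing n with
  | zero => rfl
  | succ k ih =>
    rw [← Nat.add_assoc, Nat.add_right_comm, ih, List.ofFn_succ]
    simp only [Fin.val_zero, Nat.add_zero, Fin.val_succ, ← Nat.add_assoc,
      Nat.add_right_comm n _ 1]
    rfl

lemma reach_run_of_lt (w : ℕ → A) {n m : ℕ} (hnm : n < m) :
    M.Reach (M.run w n) (M.run w m) := by
  refine ⟨List.ofFn fun i : Fin (m - n) => w (n + i), ?_, ?_⟩
  · simpa using Nat.sub_ne_zero_of_lt hnm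
  · rw [← run_add, Nat.add_sub_cancel' hnm.le]

lemma run_mem_of_forall_delta_mem {S : Set Q} (hS : ∀ q ∈ S, ∀ a, M.delta q a ∈ S)
    (hinit : M.init ∈ S) (w : ℕ → A) (n : ℕ) : M.run w n ∈ S := by
  induction n with
  | zero => exact hinit
  | succ n ih => exact hS _ ih (w n)

variable {M}

lemma run_start_periodic {q : Q} {u : List A} (hu : 0 < u.length) (hq : M.deltaStar q u = q)
    (j : ℕ) :
    (M.start q).run (fun n => u[n % u.length]'(Nat.mod_lt n hu)) (j * u.length) = q := by
  induction j with
  | zero => rw [Nat.zero_mul]; rfl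
  | succ j ih =>
    have hblock : (List.ofFn fun i : Fin u.length => u[(j * u.length + i) % u.length]'
        (Nat.mod_lt _ hu)) = u := by
      refine List.ext_getElem (by simp) fun i hi _ => ?_
      simp only [List.getElem_ofFn, Nat.mul_comm j, Nat.mul_add_mod,
        Nat.mod_eq_of_lt (List.length_ofFn ▸ hi)]
    rw [Nat.succ_mul, run_add, ih, hblock, deltaStar_start, hq]

lemma lang_start_nonempty_of_reach_self {q : Q} (hq : M.Reach q q) (hF : q ∈ M.F) :
    (M.start q).Lang.Nonempty := by
  obtain ⟨u, hu, hcycle⟩ := hq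
  have hlen : 0 < u.length := List.length_pos_iff.mpr hu
  exact ⟨_, q, hF, fun N => ⟨N * u.length, Nat.le_mul_of_pos_right N hlen,
    run_start_periodic hlen hcycle N⟩⟩

lemma run_start_cons (q : Q) (a : A) (w : ℕ → A) (n : ℕ) :
    (M.start q).run (fun k => Nat.casesOn k a w) (n + 1) =
      (M.start (M.delta q a)).run w n := by
  induction n with
  | zero => rfl
  | succ n ih => exact congrArg (M.delta · (w n)) ih

lemma lang_start_delta_eq_empty {q : Q} (hq : (M.start q).Lang = ∅) (a : A) :
    (M.start (M.delta q a)).Lang = ∅ := by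
  refine Set.eq_empty_of_forall_notMem fun w ⟨q', hF, hinf⟩ => ?_
  refine hq.subset (⟨q', hF, fun N => ?_⟩ : (fun k => Nat.casesOn k a w) ∈ (M.start q).Lang)
  obtain ⟨n, hNn, hn⟩ := hinf N
  exact ⟨n + 1, Nat.le_succ_of_le hNn, (run_start_cons q a w n).trans hn⟩

lemma lang_start_eq_empty_of_forall_delta_mem {S : Set Q}
    (hrec : ∀ q ∈ S, ¬ (M.Reach q q ∧ q ∈ M.F)) (hS : ∀ q ∈ S, ∀ a, M.delta q a ∈ S)
    {q : Q} (hq : q ∈ S) : (M.start q).Lang = ∅ := by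
  refine Set.eq_empty_of_forall_notMem fun w ⟨q', hF, hinf⟩ => ?_
  have hrun := (M.start q).run_mem_of_forall_delta_mem hS hq w
  obtain ⟨n, -, hn⟩ := hinf 0
  obtain ⟨m, hnm, hm⟩ := hinf (n + 1)
  have hreach := (M.start q).reach_run_of_lt w (Nat.lt_of_succ_le hnm)
  rw [hn, hm, reach_start] at hreach
  exact hrec q' (hn ▸ hrun n) ⟨hreach, hF⟩

end DBA

theorem stmt16_general {A Q : Type} (M : DBA A Q) :
    (∀ q : Q, (M.start q).Lang = ∅ → ¬ (M.Reach q q ∧ q ∈ M.F)) ∧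
    (∀ q : Q, (M.start q).Lang = ∅ → ∀ a : A, (M.start (M.delta q a)).Lang = ∅) ∧
    (∀ S : Set Q,
      (∀ q ∈ S, ¬ (M.Reach q q ∧ q ∈ M.F)) →
      (∀ q ∈ S, ∀ a : A, M.delta q a ∈ S) →
      ∀ q ∈ S, (M.start q).Lang = ∅) :=
  ⟨fun _ hq ⟨hrec, hF⟩ => (DBA.lang_start_nonempty_of_reach_self hrec hF).ne_empty hq,
    fun _ hq => DBA.lang_start_delta_eq_empty hq,
    fun _ hrec hS _ => DBA.lang_start_eq_empty_of_forall_delta_mem hrec hS⟩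

/-- `Q_∅` is the greatest set of states containing no recurrent
accepting state and closed under transitions. -/
theorem stmt16 {A Q : Type} [Fintype A] [Fintype Q] (M : DBA A Q) (hweak : M.Weak) :
    (∀ q : Q, (M.start q).Lang = ∅ → ¬ (M.Reach q q ∧ q ∈ M.F)) ∧
    (∀ q : Q, (M.start q).Lang = ∅ → ∀ a : A, (M.start (M.delta q a)).Lang = ∅) ∧
    (∀ S : Set Q,
      (∀ q ∈ S, ¬ (M.Reach q q ∧ q ∈ M.F)) →
      (∀ q ∈ S, ∀ a : A, M.delta q a ∈ S) →
      ∀ q ∈ S, (M.start q).Lang = ∅) :=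
  stmt16_general M
end
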